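/- arXiv:1208.2344 — 6 statements merged into one kernel-verified Lean document; each statement's English description precedes it below -/
import Mathlib

section
/- Let G be a finite abelian group, let A, B ⊆ G, let k, l ≥ 1 be integers, and let q : G^k → ℂ be any function. For x = (x_1,…,x_k) ∈ G^k set A^B_x := {b ∈ B : b + x_i ∈ A for all i = 1,…,k}. Then |A|^{2l} · |∑_{x∈G^k} q(x)·|A^B_x||^2 ≤ E_{k+l+1}(B,A) · ∑_{x∈G^k} |A^l − Δ_l(A^B_x)| · |q(x)|^2, and likewise with A^l + Δ_l(A^B_x) in place of A^l − Δ_l(A^B_x). -/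
open scoped BigOperators Pointwise

/-- `A^B_x := {b ∈ B : b + x_i ∈ A for all i}`. -/
def fiber {G : Type*} [AddCommGroup G] {k : ℕ} (A B : Set G) (x : Fin k → G) : Set G :=
  {b ∈ B | ∀ i, b + x i ∈ A}

/-- The diagonal `Δ_l(S) = {(s,…,s) : s ∈ S} ⊆ G^l`. -/
def diag {G : Type*} (l : ℕ) (S : Set G) : Set (Fin l → G) :=
  {f | ∃ s ∈ S, f = fun _ => s}

/-- The Cartesian power `A^l ⊆ G^l`. -/
def cartPow {G : Type*} (l : ℕ) (A : Set G) : Set (Fin l → G) :=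
  {f | ∀ i, f i ∈ A}

/-- `E_m(B,A) = ∑_{z ∈ G} |B ∩ (B-z)| · |A ∩ (A-z)|^{m-1}`. -/
noncomputable def Em {G : Type*} [AddCommGroup G] [Fintype G] (m : ℕ) (B A : Set G) : ℕ :=
  ∑ z : G, ({b ∈ B | b + z ∈ B}).ncard * ({a ∈ A | a + z ∈ A}).ncard ^ (m - 1)

open Finset
open scoped Classical

/- ### Abstract Cauchy–Schwarz step -/

lemma key_aux {ι κ : Type*} [Fintype ι] [Fintype κ] (q : ι → ℂ) (S : ι → ℕ)
    (r : ι → κ → ℕ) (D : ι → Set κ) (E Ac : ℕ) (l : ℕ)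
    (H1 : ∀ x, Ac ^ l * S x = ∑ y : κ, r x y)
    (H2 : ∀ x y, r x y ≠ 0 → y ∈ D x)
    (H3 : ∑ x : ι, ∑ y : κ, (r x y) ^ 2 ≤ E) :
    (Ac : ℝ) ^ (2 * l) * ‖∑ x : ι, q x * (S x : ℂ)‖ ^ 2 ≤
      (E : ℝ) * ∑ x : ι, ((D x).ncard : ℝ) * ‖q x‖ ^ 2 := by
  classical
  set T : ι → ℝ := fun x => ∑ y : κ, ((r x y : ℝ)) ^ 2 with hT
  have hTnn : ∀ x, 0 ≤ T x := fun x => Finset.sum_nonneg fun y _ => sq_nonneg _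
  set Dc : ι → ℝ := fun x => ((D x).ncard : ℝ) with hDc
  have hDnn : ∀ x, 0 ≤ Dc x := fun x => Nat.cast_nonneg _
  have stepC : ∀ x, ((∑ y : κ, (r x y : ℝ))) ^ 2 ≤ Dc x * T x := by
    intro x
    have hD : (D x).Finite := Set.toFinite _
    have hsub : ∀ y : κ, y ∉ hD.toFinset → (r x y : ℝ) = 0 := by
      intro y hy
      by_contra h
      exact hy (hD.mem_toFinset.2 (H2 x y (by exact_mod_cast h)))
    have e1 : ∑ y : κ, (r x y : ℝ) = ∑ y ∈ hD.toFinset, (r x y : ℝ) :=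
      (Finset.sum_subset (Finset.subset_univ _) (fun y _ hy => hsub y hy)).symm
    have e2 : ∑ y ∈ hD.toFinset, ((r x y : ℝ)) ^ 2 ≤ T x := by
      apply Finset.sum_le_sum_of_subset_of_nonneg (Finset.subset_univ _)
      intro y _ _; exact sq_nonneg _
    calc (∑ y : κ, (r x y : ℝ)) ^ 2 = (∑ y ∈ hD.toFinset, (r x y : ℝ)) ^ 2 := by rw [e1]
      _ ≤ hD.toFinset.card * ∑ y ∈ hD.toFinset, ((r x y : ℝ)) ^ 2 :=
          sq_sum_le_card_mul_sum_sq
      _ ≤ Dc x * T x := by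
          apply mul_le_mul _ e2 (Finset.sum_nonneg fun y _ => sq_nonneg _) (hDnn x)
          simp only [hDc, Set.ncard_eq_toFinset_card _ hD]; exact le_refl _
  have stepCsqrt : ∀ x, (∑ y : κ, (r x y : ℝ)) ≤ Real.sqrt (Dc x) * Real.sqrt (T x) := by
    intro x
    have h := stepC x
    have hnn : (0:ℝ) ≤ ∑ y : κ, (r x y : ℝ) := Finset.sum_nonneg fun y _ => Nat.cast_nonneg _
    rw [← Real.sqrt_mul_self hnn] at *
    rw [← Real.sqrt_mul (hDnn x)]
    exact Real.sqrt_le_sqrt (by nlinarith [h])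
  have stepA : ‖∑ x : ι, q x * (S x : ℂ)‖ ≤ ∑ x : ι, ‖q x‖ * (S x : ℝ) := by
    refine (norm_sum_le _ _).trans ?_
    apply Finset.sum_le_sum
    intro x _
    rw [norm_mul]
    simp
  have main : (Ac : ℝ) ^ l * ‖∑ x : ι, q x * (S x : ℂ)‖ ≤
      Real.sqrt (∑ x : ι, Dc x * ‖q x‖ ^ 2) * Real.sqrt (E : ℝ) := by
    calc (Ac : ℝ) ^ l * ‖∑ x : ι, q x * (S x : ℂ)‖
        ≤ (Ac : ℝ) ^ l * ∑ x : ι, ‖q x‖ * (S x : ℝ) := by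
          apply mul_le_mul_of_nonneg_left stepA (by positivity)
      _ = ∑ x : ι, ‖q x‖ * ((Ac : ℝ) ^ l * (S x : ℝ)) := by
          rw [Finset.mul_sum]; apply Finset.sum_congr rfl; intro x _; ring
      _ = ∑ x : ι, ‖q x‖ * (∑ y : κ, (r x y : ℝ)) := by
          apply Finset.sum_congr rfl; intro x _
          congr 1
          exact_mod_cast congrArg (Nat.cast : ℕ → ℝ) (H1 x)
      _ ≤ ∑ x : ι, (‖q x‖ * Real.sqrt (Dc x)) * Real.sqrt (T x) := by
          apply Finset.sum_le_sum; intro x _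
          rw [mul_assoc]
          exact mul_le_mul_of_nonneg_left (stepCsqrt x) (norm_nonneg _)
      _ ≤ Real.sqrt (∑ x : ι, (‖q x‖ * Real.sqrt (Dc x)) ^ 2) *
            Real.sqrt (∑ x : ι, (Real.sqrt (T x)) ^ 2) := by
          exact Real.sum_mul_le_sqrt_mul_sqrt Finset.univ
            (fun x => ‖q x‖ * Real.sqrt (Dc x)) (fun x => Real.sqrt (T x))
      _ = Real.sqrt (∑ x : ι, Dc x * ‖q x‖ ^ 2) * Real.sqrt (∑ x : ι, T x) := by
          congr 2
          · apply Finset.sum_congr rfl; intro x _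
            rw [mul_pow, Real.sq_sqrt (hDnn x)]; ring
          · apply Finset.sum_congr rfl; intro x _; exact Real.sq_sqrt (hTnn x)
      _ ≤ Real.sqrt (∑ x : ι, Dc x * ‖q x‖ ^ 2) * Real.sqrt (E : ℝ) := by
          apply mul_le_mul_of_nonneg_left _ (Real.sqrt_nonneg _)
          apply Real.sqrt_le_sqrt
          calc ∑ x : ι, T x = ((∑ x : ι, ∑ y : κ, (r x y) ^ 2 : ℕ) : ℝ) := by push_cast; rfl
            _ ≤ (E : ℝ) := by exact_mod_cast H3
  have lhs_eq : (Ac : ℝ) ^ (2 * l) * ‖∑ x : ι, q x * (S x : ℂ)‖ ^ 2 =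
      ((Ac : ℝ) ^ l * ‖∑ x : ι, q x * (S x : ℂ)‖) ^ 2 := by
    rw [mul_pow, ← pow_mul]; ring_nf
  rw [lhs_eq]
  have hnn : 0 ≤ (Ac : ℝ) ^ l * ‖∑ x : ι, q x * (S x : ℂ)‖ := by positivity
  calc ((Ac : ℝ) ^ l * ‖∑ x : ι, q x * (S x : ℂ)‖) ^ 2
      ≤ (Real.sqrt (∑ x : ι, Dc x * ‖q x‖ ^ 2) * Real.sqrt (E : ℝ)) ^ 2 := by
        apply pow_le_pow_left₀ hnn main
    _ = (∑ x : ι, Dc x * ‖q x‖ ^ 2) * (E : ℝ) := by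
        rw [mul_pow, Real.sq_sqrt (Finset.sum_nonneg fun x _ =>
          mul_nonneg (hDnn x) (sq_nonneg _)), Real.sq_sqrt (Nat.cast_nonneg _)]
    _ = (E : ℝ) * ∑ x : ι, ((D x).ncard : ℝ) * ‖q x‖ ^ 2 := by rw [mul_comm]

/- ### Instance-free counting -/

noncomputable def cnt {α : Type*} [Fintype α] (p : α → Prop) : ℕ :=
  (@Finset.filter α p (Classical.decPred p) Finset.univ).card

lemma cnt_congr {α : Type*} [Fintype α] {p q : α → Prop} (h : ∀ a, p a ↔ q a) :
    cnt p = cnt q :=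
  congrArg cnt (funext fun a => propext (h a))

lemma cnt_sum {α : Type*} [Fintype α] (p : α → Prop) [inst : DecidablePred p] :
    cnt p = ∑ a : α, if p a then (1:ℕ) else 0 := by
  unfold cnt
  rw [@Finset.card_filter _ p (Classical.decPred p) Finset.univ]
  exact Finset.sum_congr rfl fun a _ =>
    @if_congr ℕ (p a) (p a) (Classical.decPred p a) (inst a) 1 0 1 0 Iff.rfl rfl rfl

lemma sum_boole_cnt {α : Type*} [Fintype α] (p : α → Prop) [DecidablePred p] :
    (∑ a : α, if p a then (1:ℕ) else 0) = cnt p := (cnt_sum p).symm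

lemma cnt_ne_zero {α : Type*} [Fintype α] {p : α → Prop} (h : cnt p ≠ 0) : ∃ a, p a := by
  classical
  rw [cnt_sum p] at h
  by_contra hc
  push_neg at hc
  exact h (Finset.sum_eq_zero fun a _ => by simp [hc a])

lemma ncard_cnt {α : Type*} [Fintype α] (s : Set α) : s.ncard = cnt (· ∈ s) := by
  classical
  rw [Set.ncard_eq_toFinset_card', cnt_sum, ← Finset.card_filter]
  congr 1
  ext a
  simp

lemma piCount {G : Type*} [Fintype G] [DecidableEq G] (n : ℕ) (P : G → Prop) :
    cnt (fun y : Fin n → G => ∀ j, P (y j)) = cnt P ^ n := by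
  classical
  rw [cnt_sum, cnt_sum]
  rw [← Finset.card_filter, ← Finset.card_filter]
  have h : (univ.filter (fun y : Fin n → G => ∀ j, P (y j))) =
      Fintype.piFinset (fun _ : Fin n => univ.filter P) := by
    ext y; simp [Fintype.mem_piFinset]
  rw [h, Fintype.card_piFinset]
  simp

section Counting
variable {G : Type*} [AddCommGroup G] [Fintype G]

lemma shiftCount (A : Set G) (u v : G) :
    cnt (fun t : G => t + u ∈ A ∧ t + v ∈ A) =
      cnt (fun a : G => a ∈ A ∧ a + (v - u) ∈ A) := by
  unfold cnt
  apply Finset.card_bij' (fun t _ => t + u) (fun a _ => a - u)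
  · intro t ht
    simp only [mem_filter, mem_univ, true_and] at ht ⊢
    refine ⟨ht.1, ?_⟩
    have : t + u + (v - u) = t + v := by abel
    rw [this]; exact ht.2
  · intro a ha
    simp only [mem_filter, mem_univ, true_and] at ha ⊢
    constructor
    · have : a - u + u = a := by abel
      rw [this]; exact ha.1
    · have : a - u + v = a + (v - u) := by abel
      rw [this]; exact ha.2
  · intro t _; abel
  · intro a _; abel

lemma evenCount (A : Set G) (z : G) :
    cnt (fun a : G => a ∈ A ∧ a + (-z) ∈ A) = cnt (fun a : G => a ∈ A ∧ a + z ∈ A) := by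
  unfold cnt
  apply Finset.card_bij' (fun a _ => a - z) (fun a _ => a + z)
  · intro a ha
    simp only [mem_filter, mem_univ, true_and, ← sub_eq_add_neg] at ha ⊢
    exact ⟨ha.2, by rw [sub_add_cancel]; exact ha.1⟩
  · intro a ha
    simp only [mem_filter, mem_univ, true_and, ← sub_eq_add_neg] at ha ⊢
    exact ⟨ha.2, by rw [add_sub_cancel_right]; exact ha.1⟩
  · intro a _; abel
  · intro a _; abel

lemma addShiftCount (A : Set G) (b : G) :
    cnt (fun t : G => t + b ∈ A) = A.ncard := by
  have h := shiftCount A b b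
  rw [cnt_congr (p := fun t : G => t + b ∈ A ∧ t + b ∈ A) (fun t => and_self_iff)] at h
  rw [h, ncard_cnt]
  exact cnt_congr fun a => by simp

lemma subShiftCount (A : Set G) (b : G) :
    cnt (fun t : G => t - b ∈ A) = A.ncard := by
  rw [cnt_congr (q := fun t : G => t + (-b) ∈ A) (fun t => by rw [sub_eq_add_neg])]
  exact addShiftCount A (-b)

end Counting

/- ### The identity `|A|^l |fiber| = ∑_y r x y` -/

section Main
variable {G : Type*} [AddCommGroup G] [Fintype G]

lemma H1m (A B : Set G) (k l : ℕ) (x : Fin k → G) :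
    A.ncard ^ l * (fiber A B x).ncard =
      ∑ y : Fin l → G, cnt (fun b : G => b ∈ fiber A B x ∧ ∀ j, y j + b ∈ A) := by
  classical
  simp_rw [cnt_sum]
  rw [Finset.sum_comm]
  have key : ∀ b : G,
      (∑ y : Fin l → G, if b ∈ fiber A B x ∧ ∀ j, y j + b ∈ A then 1 else 0) =
      if b ∈ fiber A B x then A.ncard ^ l else 0 := by
    intro b
    by_cases hb : b ∈ fiber A B x
    · simp only [hb, true_and, if_true]
      rw [sum_boole_cnt, piCount l (fun t => t + b ∈ A), addShiftCount]
    · simp [hb]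
  rw [Finset.sum_congr rfl (fun b _ => key b), ← Finset.sum_filter,
    Finset.sum_const, smul_eq_mul, mul_comm]
  congr 1
  rw [ncard_cnt, cnt_sum, ← Finset.card_filter]

lemma H1p (A B : Set G) (k l : ℕ) (x : Fin k → G) :
    A.ncard ^ l * (fiber A B x).ncard =
      ∑ y : Fin l → G, cnt (fun b : G => b ∈ fiber A B x ∧ ∀ j, y j - b ∈ A) := by
  classical
  simp_rw [cnt_sum]
  rw [Finset.sum_comm]
  have key : ∀ b : G,
      (∑ y : Fin l → G, if b ∈ fiber A B x ∧ ∀ j, y j - b ∈ A then 1 else 0) =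
      if b ∈ fiber A B x then A.ncard ^ l else 0 := by
    intro b
    by_cases hb : b ∈ fiber A B x
    · simp only [hb, true_and, if_true]
      rw [sum_boole_cnt, piCount l (fun t => t - b ∈ A), subShiftCount]
    · simp [hb]
  rw [Finset.sum_congr rfl (fun b _ => key b), ← Finset.sum_filter,
    Finset.sum_const, smul_eq_mul, mul_comm]
  congr 1
  rw [ncard_cnt, cnt_sum, ← Finset.card_filter]

end Main

/- ### Inner double sums and the energy bound -/

lemma boole_mul_boole (p q : Prop) [Decidable p] [Decidable q] :
    (if p then (1:ℕ) else 0) * (if q then 1 else 0) = if p ∧ q then 1 else 0 := by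
  split_ifs <;> simp_all

lemma sum_sum_ite_split {α β : Type*} [Fintype α] [Fintype β] (P : Prop) [Decidable P]
    (Q : α → Prop) (R : β → Prop) [DecidablePred Q] [DecidablePred R] :
    (∑ a : α, ∑ b : β, if P ∧ Q a ∧ R b then (1:ℕ) else 0) =
      (if P then 1 else 0) * cnt Q * cnt R := by
  by_cases hP : P
  · simp only [hP, true_and, if_true, one_mul]
    have h1 : ∀ a : α, (∑ b : β, if Q a ∧ R b then (1:ℕ) else 0) =
        if Q a then cnt R else 0 := by
      intro a
      by_cases hQ : Q a
      · simp only [hQ, true_and, if_true]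
        exact sum_boole_cnt R
      · simp [hQ]
    rw [Finset.sum_congr rfl (fun a _ => h1 a), ← Finset.sum_filter,
      Finset.sum_const, smul_eq_mul]
    congr 1
    rw [cnt_sum, ← Finset.card_filter]
  · simp [hP]

lemma sum_swap4 {α β γ δ M : Type*} [Fintype α] [Fintype β] [Fintype γ] [Fintype δ]
    [AddCommMonoid M] (f : α → β → γ → δ → M) :
    (∑ a : α, ∑ b : β, ∑ c : γ, ∑ d : δ, f a b c d) =
      ∑ c : γ, ∑ d : δ, ∑ a : α, ∑ b : β, f a b c d := by
  calc (∑ a : α, ∑ b : β, ∑ c : γ, ∑ d : δ, f a b c d)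
      = ∑ a : α, ∑ c : γ, ∑ b : β, ∑ d : δ, f a b c d :=
        Finset.sum_congr rfl fun a _ => Finset.sum_comm
    _ = ∑ c : γ, ∑ a : α, ∑ b : β, ∑ d : δ, f a b c d := Finset.sum_comm
    _ = ∑ c : γ, ∑ a : α, ∑ d : δ, ∑ b : β, f a b c d :=
        Finset.sum_congr rfl fun c _ => Finset.sum_congr rfl fun a _ => Finset.sum_comm
    _ = ∑ c : γ, ∑ d : δ, ∑ a : α, ∑ b : β, f a b c d :=
        Finset.sum_congr rfl fun c _ => Finset.sum_comm

section Main2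
variable {G : Type*} [AddCommGroup G] [Fintype G]

lemma innerXY_m (A B : Set G) (k l : ℕ) (b b' : G) :
    (∑ x : Fin k → G, ∑ y : Fin l → G,
        if ((b ∈ B ∧ ∀ i, b + x i ∈ A) ∧ ∀ j, y j + b ∈ A) ∧
            ((b' ∈ B ∧ ∀ i, b' + x i ∈ A) ∧ ∀ j, y j + b' ∈ A) then (1:ℕ) else 0) =
      (if b ∈ B ∧ b' ∈ B then 1 else 0) *
        cnt (fun a : G => a ∈ A ∧ a + (b' - b) ∈ A) ^ (k + l) := by
  classical
  have hiff : ∀ (x : Fin k → G) (y : Fin l → G),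
      (((b ∈ B ∧ ∀ i, b + x i ∈ A) ∧ ∀ j, y j + b ∈ A) ∧
        ((b' ∈ B ∧ ∀ i, b' + x i ∈ A) ∧ ∀ j, y j + b' ∈ A)) ↔
      ((b ∈ B ∧ b' ∈ B) ∧ (∀ i, b + x i ∈ A ∧ b' + x i ∈ A) ∧
        (∀ j, y j + b ∈ A ∧ y j + b' ∈ A)) := by
    intro x y
    simp only [forall_and]
    tauto
  rw [Finset.sum_congr rfl fun x _ => Finset.sum_congr rfl fun y _ =>
    if_congr (hiff x y) rfl rfl]
  rw [sum_sum_ite_split]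
  have step : cnt (fun t : G => b + t ∈ A ∧ b' + t ∈ A) =
      cnt (fun a : G => a ∈ A ∧ a + (b' - b) ∈ A) :=
    (cnt_congr (fun t => by rw [add_comm b t, add_comm b' t])).trans (shiftCount A b b')
  have hX : cnt (fun x : Fin k → G => ∀ i, b + x i ∈ A ∧ b' + x i ∈ A) =
      cnt (fun a : G => a ∈ A ∧ a + (b' - b) ∈ A) ^ k :=
    (piCount k (fun t => b + t ∈ A ∧ b' + t ∈ A)).trans (congrArg (· ^ k) step)
  have hY : cnt (fun y : Fin l → G => ∀ j, y j + b ∈ A ∧ y j + b' ∈ A) =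
      cnt (fun a : G => a ∈ A ∧ a + (b' - b) ∈ A) ^ l :=
    (piCount l (fun t => t + b ∈ A ∧ t + b' ∈ A)).trans
      (congrArg (· ^ l) (shiftCount A b b'))
  rw [hX, hY, mul_assoc, ← pow_add]

lemma innerXY_p (A B : Set G) (k l : ℕ) (b b' : G) :
    (∑ x : Fin k → G, ∑ y : Fin l → G,
        if ((b ∈ B ∧ ∀ i, b + x i ∈ A) ∧ ∀ j, y j - b ∈ A) ∧
            ((b' ∈ B ∧ ∀ i, b' + x i ∈ A) ∧ ∀ j, y j - b' ∈ A) then (1:ℕ) else 0) =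
      (if b ∈ B ∧ b' ∈ B then 1 else 0) *
        cnt (fun a : G => a ∈ A ∧ a + (b' - b) ∈ A) ^ (k + l) := by
  classical
  have hiff : ∀ (x : Fin k → G) (y : Fin l → G),
      (((b ∈ B ∧ ∀ i, b + x i ∈ A) ∧ ∀ j, y j - b ∈ A) ∧
        ((b' ∈ B ∧ ∀ i, b' + x i ∈ A) ∧ ∀ j, y j - b' ∈ A)) ↔
      ((b ∈ B ∧ b' ∈ B) ∧ (∀ i, b + x i ∈ A ∧ b' + x i ∈ A) ∧
        (∀ j, y j - b ∈ A ∧ y j - b' ∈ A)) := by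
    intro x y
    simp only [forall_and]
    tauto
  rw [Finset.sum_congr rfl fun x _ => Finset.sum_congr rfl fun y _ =>
    if_congr (hiff x y) rfl rfl]
  rw [sum_sum_ite_split]
  have step : cnt (fun t : G => b + t ∈ A ∧ b' + t ∈ A) =
      cnt (fun a : G => a ∈ A ∧ a + (b' - b) ∈ A) :=
    (cnt_congr (fun t => by rw [add_comm b t, add_comm b' t])).trans (shiftCount A b b')
  have hX : cnt (fun x : Fin k → G => ∀ i, b + x i ∈ A ∧ b' + x i ∈ A) =
      cnt (fun a : G => a ∈ A ∧ a + (b' - b) ∈ A) ^ k :=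
    (piCount k (fun t => b + t ∈ A ∧ b' + t ∈ A)).trans (congrArg (· ^ k) step)
  have stepP : cnt (fun t : G => t - b ∈ A ∧ t - b' ∈ A) =
      cnt (fun a : G => a ∈ A ∧ a + (b' - b) ∈ A) := by
    refine ((cnt_congr (fun t => by
        rw [sub_eq_add_neg t b, sub_eq_add_neg t b'])).trans
      (shiftCount A (-b) (-b'))).trans ?_
    refine (cnt_congr (fun a => by rw [show -b' - -b = -(b' - b) by abel])).trans ?_
    exact evenCount A (b' - b)
  have hY : cnt (fun y : Fin l → G => ∀ j, y j - b ∈ A ∧ y j - b' ∈ A) =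
      cnt (fun a : G => a ∈ A ∧ a + (b' - b) ∈ A) ^ l :=
    (piCount l (fun t => t - b ∈ A ∧ t - b' ∈ A)).trans (congrArg (· ^ l) stepP)
  rw [hX, hY, mul_assoc, ← pow_add]

end Main2

section Main3
variable {G : Type*} [AddCommGroup G] [Fintype G]

lemma Em_eq (m : ℕ) (B A : Set G) : Em m B A =
    ∑ z : G, cnt (fun b : G => b ∈ B ∧ b + z ∈ B) *
      cnt (fun a : G => a ∈ A ∧ a + z ∈ A) ^ (m - 1) := by
  unfold Em
  exact Finset.sum_congr rfl fun z _ => by rw [ncard_cnt, ncard_cnt]; rfl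

lemma sq_cnt_expand {β : Type*} [Fintype β] (p : β → Prop) [DecidablePred p] :
    cnt p ^ 2 = ∑ b : β, ∑ b' : β, if p b ∧ p b' then (1:ℕ) else 0 := by
  rw [sq, cnt_sum, Finset.sum_mul_sum]
  exact Finset.sum_congr rfl fun b _ => Finset.sum_congr rfl fun b' _ =>
    boole_mul_boole _ _

lemma reindex_final (A B : Set G) (n : ℕ) :
    (∑ b : G, ∑ b' : G, (if b ∈ B ∧ b' ∈ B then (1:ℕ) else 0) *
        cnt (fun a : G => a ∈ A ∧ a + (b' - b) ∈ A) ^ n) =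
      ∑ z : G, cnt (fun b : G => b ∈ B ∧ b + z ∈ B) *
        cnt (fun a : G => a ∈ A ∧ a + z ∈ A) ^ n := by
  have h1 : ∀ b : G, (∑ b' : G, (if b ∈ B ∧ b' ∈ B then (1:ℕ) else 0) *
      cnt (fun a : G => a ∈ A ∧ a + (b' - b) ∈ A) ^ n) =
      ∑ z : G, (if b ∈ B ∧ b + z ∈ B then (1:ℕ) else 0) *
        cnt (fun a : G => a ∈ A ∧ a + z ∈ A) ^ n := by
    intro b
    refine Fintype.sum_equiv (Equiv.subRight b) _ _ (fun b' => ?_)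
    simp only [Equiv.subRight_apply]
    have h : b + (b' - b) = b' := by abel
    simp only [h]
  rw [Finset.sum_congr rfl fun b _ => h1 b, Finset.sum_comm]
  refine Finset.sum_congr rfl fun z _ => ?_
  rw [← Finset.sum_mul, sum_boole_cnt]

lemma H3m (A B : Set G) (k l : ℕ) :
    (∑ x : Fin k → G, ∑ y : Fin l → G,
        cnt (fun b : G => b ∈ fiber A B x ∧ ∀ j, y j + b ∈ A) ^ 2) =
      Em (k + l + 1) B A := by
  have e1 : ∀ (x : Fin k → G) (y : Fin l → G),
      cnt (fun b : G => b ∈ fiber A B x ∧ ∀ j, y j + b ∈ A) ^ 2 =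
      ∑ b : G, ∑ b' : G,
        if ((b ∈ B ∧ ∀ i, b + x i ∈ A) ∧ ∀ j, y j + b ∈ A) ∧
            ((b' ∈ B ∧ ∀ i, b' + x i ∈ A) ∧ ∀ j, y j + b' ∈ A) then (1:ℕ) else 0 := by
    intro x y
    rw [cnt_congr (q := fun b : G => (b ∈ B ∧ ∀ i, b + x i ∈ A) ∧ ∀ j, y j + b ∈ A)
      (fun b => by unfold fiber; simp only [Set.mem_setOf_eq])]
    exact sq_cnt_expand _
  rw [Finset.sum_congr rfl fun x _ => Finset.sum_congr rfl fun y _ => e1 x y,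
    sum_swap4, Finset.sum_congr rfl fun b _ => Finset.sum_congr rfl fun b' _ =>
      innerXY_m A B k l b b', reindex_final A B (k + l), Em_eq]
  norm_num

lemma H3p (A B : Set G) (k l : ℕ) :
    (∑ x : Fin k → G, ∑ y : Fin l → G,
        cnt (fun b : G => b ∈ fiber A B x ∧ ∀ j, y j - b ∈ A) ^ 2) =
      Em (k + l + 1) B A := by
  have e1 : ∀ (x : Fin k → G) (y : Fin l → G),
      cnt (fun b : G => b ∈ fiber A B x ∧ ∀ j, y j - b ∈ A) ^ 2 =
      ∑ b : G, ∑ b' : G,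
        if ((b ∈ B ∧ ∀ i, b + x i ∈ A) ∧ ∀ j, y j - b ∈ A) ∧
            ((b' ∈ B ∧ ∀ i, b' + x i ∈ A) ∧ ∀ j, y j - b' ∈ A) then (1:ℕ) else 0 := by
    intro x y
    rw [cnt_congr (q := fun b : G => (b ∈ B ∧ ∀ i, b + x i ∈ A) ∧ ∀ j, y j - b ∈ A)
      (fun b => by unfold fiber; simp only [Set.mem_setOf_eq])]
    exact sq_cnt_expand _
  rw [Finset.sum_congr rfl fun x _ => Finset.sum_congr rfl fun y _ => e1 x y,
    sum_swap4, Finset.sum_congr rfl fun b _ => Finset.sum_congr rfl fun b' _ =>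
      innerXY_p A B k l b b', reindex_final A B (k + l), Em_eq]
  norm_num

end Main3

section Main4
variable {G : Type*} [AddCommGroup G] [Fintype G]

lemma H2m (A B : Set G) {k l : ℕ} (x : Fin k → G) (y : Fin l → G)
    (h : cnt (fun b : G => b ∈ fiber A B x ∧ ∀ j, y j + b ∈ A) ≠ 0) :
    y ∈ cartPow l A - diag l (fiber A B x) := by
  obtain ⟨b, hb⟩ := cnt_ne_zero h
  rw [Set.mem_sub]
  refine ⟨fun j => y j + b, fun i => hb.2 i, fun _ => b, ⟨b, hb.1, rfl⟩, ?_⟩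
  funext j
  show y j + b - b = y j
  simp

lemma H2p (A B : Set G) {k l : ℕ} (x : Fin k → G) (y : Fin l → G)
    (h : cnt (fun b : G => b ∈ fiber A B x ∧ ∀ j, y j - b ∈ A) ≠ 0) :
    y ∈ cartPow l A + diag l (fiber A B x) := by
  obtain ⟨b, hb⟩ := cnt_ne_zero h
  rw [Set.mem_add]
  refine ⟨fun j => y j - b, fun i => hb.2 i, fun _ => b, ⟨b, hb.1, rfl⟩, ?_⟩
  funext j
  show y j - b + b = y j
  simp

end Main4

theorem weighted_Katz_Koester {G : Type*} [AddCommGroup G] [Fintype G]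
    (A B : Set G) (k l : ℕ) (hk : 1 ≤ k) (hl : 1 ≤ l) (q : (Fin k → G) → ℂ) :
    ((A.ncard : ℝ) ^ (2 * l) *
        ‖∑ x : Fin k → G, q x * ((fiber A B x).ncard : ℂ)‖ ^ 2 ≤
      (Em (k + l + 1) B A : ℝ) *
        ∑ x : Fin k → G,
          ((cartPow l A - diag l (fiber A B x)).ncard : ℝ) * ‖q x‖ ^ 2) ∧
    ((A.ncard : ℝ) ^ (2 * l) *
        ‖∑ x : Fin k → G, q x * ((fiber A B x).ncard : ℂ)‖ ^ 2 ≤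
      (Em (k + l + 1) B A : ℝ) *
        ∑ x : Fin k → G,
          ((cartPow l A + diag l (fiber A B x)).ncard : ℝ) * ‖q x‖ ^ 2) := by
  constructor
  · exact key_aux q (fun x => (fiber A B x).ncard)
      (fun x y => cnt (fun b : G => b ∈ fiber A B x ∧ ∀ j, y j + b ∈ A))
      (fun x => cartPow l A - diag l (fiber A B x)) (Em (k + l + 1) B A) A.ncard l
      (fun x => H1m A B k l x) (fun x y h => H2m A B x y h) (le_of_eq (H3m A B k l))
  · exact key_aux q (fun x => (fiber A B x).ncard)
      (fun x y => cnt (fun b : G => b ∈ fiber A B x ∧ ∀ j, y j - b ∈ A))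
      (fun x => cartPow l A + diag l (fiber A B x)) (Em (k + l + 1) B A) A.ncard l
      (fun x => H1p A B k l x) (fun x y h => H2p A B x y h) (le_of_eq (H3p A B k l))
end

section
/- Let G be a finite abelian group, A, B ⊆ G, and k, l ≥ 1 integers. For x = (x_1,…,x_k) ∈ G^k set A^B_x := {b ∈ B : b + x_i ∈ A for all i}. Then: (1) |A|^{2l} · E_{k+1}(B,A)^2 ≤ E_{k+l+1}(B,A) · ∑_{x∈G^k} |A^l ± Δ_l(A^B_x)| · |A^B_x|^2, and (2) |A|^{2l} · ∑_{x∈G^k, A^B_x ≠ ∅} |A^B_x|^2 / |A^l ± Δ_l(A^B_x)| ≤ E_{k+l+1}(B,A); here each statement holds for both choices of sign ±. -/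
open scoped BigOperators Pointwise Classical

section KKaux

open Finset

set_option linter.unusedSectionVars false
set_option maxHeartbeats 1000000

variable {G : Type*} [AddCommGroup G] [Fintype G]

/-- auxiliary counting function `|C ∩ (C - z)|` at the `Finset` level. -/
noncomputable def kkC2 (A : Finset G) (z : G) : ℕ := (A.filter (fun a => a + z ∈ A)).card

/-- the fiber at the `Finset` level. -/
noncomputable def kkFib (A B : Finset G) {k : ℕ} (x : Fin k → G) : Finset G :=
  B.filter (fun b => ∀ i, b + x i ∈ A)

lemma kk_card_filter_univ (s : Finset G) (p : G → Prop) [DecidablePred p] :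
    (s.filter p).card = ∑ a : G, if a ∈ s ∧ p a then 1 else 0 := by
  rw [Finset.card_filter]
  rw [← Finset.sum_subset (Finset.subset_univ s) (by intro a _ ha; simp [ha])]
  exact Finset.sum_congr rfl (fun a ha => by simp [ha])

lemma kk_sum_ind_univ (s : Finset G) (p : G → Prop) [DecidablePred p] :
    ∑ a ∈ s, (if p a then (1:ℕ) else 0) = ∑ a : G, if a ∈ s ∧ p a then 1 else 0 := by
  rw [← Finset.card_filter, kk_card_filter_univ]

lemma kkC2_neg (A : Finset G) (z : G) : kkC2 A (-z) = kkC2 A z := by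
  unfold kkC2
  apply Finset.card_equiv (Equiv.addRight (-z))
  intro a
  simp only [Finset.mem_filter, Equiv.coe_addRight]
  constructor
  · rintro ⟨h1, h2⟩; exact ⟨h2, by simpa using h1⟩
  · rintro ⟨h1, h2⟩; exact ⟨by simpa using h2, h1⟩

lemma kk_ind_sum_mem (S : Finset G) (b : G) :
    (∑ z : G, if b + z ∈ S then (1:ℕ) else 0) = S.card := by
  calc (∑ z : G, if b + z ∈ S then (1:ℕ) else 0)
      = ∑ w : G, if w ∈ S then (1:ℕ) else 0 :=
        Fintype.sum_equiv (Equiv.addLeft b) _ _ (fun z => rfl)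
    _ = S.card := by simp [Finset.sum_ite_mem]

lemma kk_sum_c2 (S : Finset G) : ∑ z : G, kkC2 S z = S.card ^ 2 := by
  unfold kkC2
  simp only [Finset.card_filter]
  rw [Finset.sum_comm]
  rw [Finset.sum_congr rfl (fun b _ => kk_ind_sum_mem S b)]
  simp [sq, mul_comm]

lemma kk_piSum (k : ℕ) (f : G → ℕ) : ∑ x : Fin k → G, ∏ i, f (x i) = (∑ t : G, f t) ^ k := by
  rw [← Fintype.piFinset_univ, ← Finset.prod_univ_sum]
  simp

lemma kk_sum_c2_fib (A B : Finset G) (k : ℕ) (z : G) :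
    ∑ x : Fin k → G, kkC2 (kkFib A B x) z = kkC2 B z * kkC2 A z ^ k := by
  have stepA : ∀ x : Fin k → G, kkC2 (kkFib A B x) z =
      ∑ b : G, (if b ∈ B ∧ b + z ∈ B then 1 else 0) *
        ∏ i, (if b + x i ∈ A ∧ b + z + x i ∈ A then 1 else 0) := by
    intro x
    rw [kkC2, kk_card_filter_univ]
    refine Finset.sum_congr rfl (fun b _ => ?_)
    rw [Finset.prod_boole]
    simp only [kkFib, Finset.mem_filter, Finset.mem_univ, true_implies]
    split_ifs with h1 h2 h3 <;> simp_all
  simp only [stepA]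
  rw [Finset.sum_comm]
  have inner : ∀ b : G, (∑ t : G, if b + t ∈ A ∧ b + z + t ∈ A then (1:ℕ) else 0)
      = kkC2 A z := by
    intro b
    rw [kkC2, kk_card_filter_univ]
    refine Fintype.sum_equiv (Equiv.addLeft b) _ _ (fun t => ?_)
    have h : b + z + t = b + t + z := by abel
    rw [h]
    rfl
  calc ∑ b : G, ∑ x : Fin k → G, (if b ∈ B ∧ b + z ∈ B then (1:ℕ) else 0) *
        ∏ i, (if b + x i ∈ A ∧ b + z + x i ∈ A then 1 else 0)
      = ∑ b : G, (if b ∈ B ∧ b + z ∈ B then 1 else 0) * kkC2 A z ^ k := by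
        refine Finset.sum_congr rfl (fun b _ => ?_)
        rw [← Finset.mul_sum,
          kk_piSum k (fun t => if b + t ∈ A ∧ b + z + t ∈ A then 1 else 0), inner b]
    _ = kkC2 B z * kkC2 A z ^ k := by
        rw [← Finset.sum_mul]
        have hB : kkC2 B z = ∑ i : G, if i ∈ B ∧ i + z ∈ B then 1 else 0 := by
          rw [kkC2, kk_card_filter_univ]
        rw [hB]

lemma kk_pair_group (S : Finset G) (h : G → ℕ) :
    ∑ s ∈ S, ∑ s' ∈ S, h (s' - s) = ∑ z : G, kkC2 S z * h z := by
  have inner : ∀ s : G, ∑ s' ∈ S, h (s' - s)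
      = ∑ z : G, (if s + z ∈ S then 1 else 0) * h z := by
    intro s
    rw [← Finset.univ_inter S, ← Finset.sum_ite_mem]
    refine (Fintype.sum_equiv (Equiv.addLeft s) _ _ (fun z => ?_)).symm
    simp only [Equiv.coe_addLeft, add_sub_cancel_left, ite_mul, one_mul, zero_mul,
      Finset.univ_inter]
  rw [Finset.sum_congr rfl (fun s _ => inner s), Finset.sum_comm]
  refine Finset.sum_congr rfl (fun z _ => ?_)
  rw [← Finset.sum_mul, kkC2, kk_card_filter_univ]
  congr 1
  exact kk_sum_ind_univ S (fun s => s + z ∈ S)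

/-- The Katz–Koester Cauchy–Schwarz counting inequality, at the `Finset` level. -/
lemma kk_main (σ : G ≃+ G) (A S : Finset G) (l : ℕ) (T : Finset (Fin l → G))
    (hT : ∀ a : Fin l → G, (∀ i, a i ∈ A) → ∀ s ∈ S, (fun i => a i + σ s) ∈ T)
    (hσ : ∀ z : G, kkC2 S (σ.symm (-z)) = kkC2 S z) :
    (A.card ^ l * S.card) ^ 2 ≤ T.card * ∑ z : G, kkC2 S z * kkC2 A z ^ l := by
  classical
  set F : Finset (Fin l → G) := Fintype.piFinset (fun _ => A) with hF
  set r : (Fin l → G) → ℕ := fun w =>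
    ((F ×ˢ S).filter (fun p => (fun i => p.1 i + σ p.2) = w)).card with hr
  have h0 : ∀ w : Fin l → G, w ∉ T → r w = 0 := by
    intro w hw
    simp only [hr, Finset.card_eq_zero, Finset.filter_eq_empty_iff]
    intro p hp hpw
    apply hw
    rw [← hpw]
    rw [Finset.mem_product] at hp
    exact hT p.1 (fun i => (Fintype.mem_piFinset.mp hp.1) i) p.2 hp.2
  have h1 : ∑ w ∈ T, r w = A.card ^ l * S.card := by
    have huniv : ∑ w : Fin l → G, r w = A.card ^ l * S.card := by
      simp only [hr, Finset.card_filter]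
      rw [Finset.sum_comm]
      have per : ∀ p : (Fin l → G) × G, p ∈ F ×ˢ S →
          (∑ w : Fin l → G, if (fun i => p.1 i + σ p.2) = w then (1:ℕ) else 0) = 1 := by
        intro p _
        rw [Finset.sum_ite_eq]
        simp
      rw [Finset.sum_congr rfl per]
      rw [Finset.sum_const, Finset.card_product, hF, Fintype.card_piFinset_const]
      simp [mul_comm]
    rw [← huniv]
    exact Finset.sum_subset (Finset.subset_univ T) (fun w _ hw => h0 w hw)
  have h2 : ∑ w : Fin l → G, r w ^ 2 = ∑ z : G, kkC2 S z * kkC2 A z ^ l := by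
    have e3 : ∀ d : G, (∑ a ∈ F, ∏ i : Fin l, if a i + d ∈ A then (1:ℕ) else 0)
        = kkC2 A d ^ l := by
      intro d
      calc (∑ a ∈ F, ∏ i : Fin l, if a i + d ∈ A then (1:ℕ) else 0)
          = ∏ _i : Fin l, ∑ t ∈ A, (if t + d ∈ A then (1:ℕ) else 0) :=
            (Finset.prod_univ_sum (fun _ => A) (fun _ t => if t + d ∈ A then (1:ℕ) else 0)).symm
        _ = (∑ t ∈ A, if t + d ∈ A then (1:ℕ) else 0) ^ l := by
            rw [Finset.prod_const, Finset.card_univ, Fintype.card_fin]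
        _ = kkC2 A d ^ l := by
            congr 1
            rw [kkC2, Finset.card_filter]
    have e2 : ∀ (a : Fin l → G) (s : G),
        (∑ q ∈ F ×ˢ S, if ((fun i => q.1 i + σ q.2) = (fun i => a i + σ s)) then (1:ℕ) else 0)
          = ∑ s' ∈ S, ∏ i : Fin l, if a i + (σ s - σ s') ∈ A then (1:ℕ) else 0 := by
      intro a s
      rw [Finset.sum_product_right]
      refine Finset.sum_congr rfl (fun s' _ => ?_)
      have cond : ∀ a' : Fin l → G,
          ((fun i => a' i + σ s') = (fun i => a i + σ s)) ↔
            (a' = fun i => a i + (σ s - σ s')) := by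
        intro a'
        rw [funext_iff, funext_iff]
        refine forall_congr' (fun i => ?_)
        have h' : a i + (σ s - σ s') = a i + σ s - σ s' := by abel
        rw [h', eq_sub_iff_add_eq]
      calc (∑ a' ∈ F, if ((fun i => a' i + σ s') = fun i => a i + σ s) then (1:ℕ) else 0)
          = ∑ a' ∈ F, (if (a' = fun i => a i + (σ s - σ s')) then (1:ℕ) else 0) :=
            Finset.sum_congr rfl (fun a' _ => by rw [if_congr (cond a') rfl rfl])
        _ = if (fun i => a i + (σ s - σ s')) ∈ F then (1:ℕ) else 0 := by
            rw [Finset.sum_ite_eq']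
        _ = ∏ i : Fin l, if a i + (σ s - σ s') ∈ A then (1:ℕ) else 0 := by
            simp [Finset.prod_boole, hF, Fintype.mem_piFinset]
    have e1 : ∑ w : Fin l → G, r w ^ 2 =
        ∑ p ∈ F ×ˢ S, ∑ q ∈ F ×ˢ S,
          (if ((fun i => q.1 i + σ q.2) = (fun i => p.1 i + σ p.2)) then (1:ℕ) else 0) := by
      have per : ∀ w : Fin l → G, r w ^ 2 =
          ∑ p ∈ F ×ˢ S, ∑ q ∈ F ×ˢ S,
            (if ((fun i => p.1 i + σ p.2) = w) then (1:ℕ) else 0) *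
            (if ((fun i => q.1 i + σ q.2) = w) then (1:ℕ) else 0) := by
        intro w
        rw [sq]
        simp only [hr, Finset.card_filter]
        rw [Finset.sum_mul_sum]
      rw [Finset.sum_congr rfl (fun w _ => per w), Finset.sum_comm]
      refine Finset.sum_congr rfl (fun p _ => ?_)
      rw [Finset.sum_comm]
      refine Finset.sum_congr rfl (fun q _ => ?_)
      simp only [ite_mul, one_mul, zero_mul]
      rw [Finset.sum_ite_eq]
      simp
    calc ∑ w : Fin l → G, r w ^ 2
        = ∑ p ∈ F ×ˢ S, ∑ q ∈ F ×ˢ S,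
            (if ((fun i => q.1 i + σ q.2) = (fun i => p.1 i + σ p.2)) then (1:ℕ) else 0) := e1
      _ = ∑ s ∈ S, ∑ a ∈ F, ∑ s' ∈ S,
            ∏ i : Fin l, if a i + (σ s - σ s') ∈ A then (1:ℕ) else 0 := by
          rw [Finset.sum_product_right]
          exact Finset.sum_congr rfl (fun s _ =>
            Finset.sum_congr rfl (fun a _ => e2 a s))
      _ = ∑ s ∈ S, ∑ s' ∈ S, kkC2 A (σ s - σ s') ^ l := by
          refine Finset.sum_congr rfl (fun s _ => ?_)
          rw [Finset.sum_comm]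
          exact Finset.sum_congr rfl (fun s' _ => e3 (σ s - σ s'))
      _ = ∑ s ∈ S, ∑ s' ∈ S, kkC2 A (σ (-(s' - s))) ^ l := by
          refine Finset.sum_congr rfl (fun s _ => Finset.sum_congr rfl (fun s' _ => ?_))
          rw [map_neg, map_sub, neg_sub]
      _ = ∑ z : G, kkC2 S z * kkC2 A (σ (-z)) ^ l :=
          kk_pair_group S (fun z => kkC2 A (σ (-z)) ^ l)
      _ = ∑ u : G, kkC2 S (σ.symm (-u)) * kkC2 A u ^ l := by
          refine Fintype.sum_equiv (σ.toEquiv.trans (Equiv.neg G)) _ _ (fun z => ?_)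
          simp [map_neg]
      _ = ∑ z : G, kkC2 S z * kkC2 A z ^ l :=
          Finset.sum_congr rfl (fun u _ => by rw [hσ u])
  have hcs : (∑ w ∈ T, r w) ^ 2 ≤ T.card * ∑ w ∈ T, r w ^ 2 := by
    have h0' := sq_sum_le_card_mul_sum_sq (s := T) (f := fun w => (r w : ℝ))
    have h' : ((∑ w ∈ T, r w : ℕ) : ℝ) ^ 2 ≤ (T.card : ℝ) * ((∑ w ∈ T, r w ^ 2 : ℕ) : ℝ) := by
      push_cast
      exact h0'
    exact_mod_cast h'
  calc (A.card ^ l * S.card) ^ 2 = (∑ w ∈ T, r w) ^ 2 := by rw [h1]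
    _ ≤ T.card * ∑ w ∈ T, r w ^ 2 := hcs
    _ ≤ T.card * ∑ w : Fin l → G, r w ^ 2 :=
        Nat.mul_le_mul_left _ (Finset.sum_le_sum_of_subset (Finset.subset_univ T))
    _ = T.card * ∑ z : G, kkC2 S z * kkC2 A z ^ l := by rw [h2]

/-- negation as an additive equivalence. -/
noncomputable def kkNeg : G ≃+ G := AddEquiv.mk' (Equiv.neg G) (fun a b => neg_add a b)

lemma kkNeg_apply (a : G) : (kkNeg : G ≃+ G) a = -a := rfl

lemma kkNeg_symm_apply (a : G) : (kkNeg : G ≃+ G).symm a = -a := by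
  apply (kkNeg (G := G)).injective
  rw [AddEquiv.apply_symm_apply, kkNeg_apply, neg_neg]

end KKaux

theorem energy_weighted_Katz_Koester {G : Type*} [AddCommGroup G] [Fintype G]
    (A B : Set G) (k l : ℕ) (hk : 1 ≤ k) (hl : 1 ≤ l) :
    ((A.ncard : ℝ) ^ (2 * l) * (Em (k + 1) B A : ℝ) ^ 2 ≤
        (Em (k + l + 1) B A : ℝ) *
          ∑ x : Fin k → G,
            ((cartPow l A - diag l (fiber A B x)).ncard : ℝ) * ((fiber A B x).ncard : ℝ) ^ 2) ∧
    ((A.ncard : ℝ) ^ (2 * l) * (Em (k + 1) B A : ℝ) ^ 2 ≤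
        (Em (k + l + 1) B A : ℝ) *
          ∑ x : Fin k → G,
            ((cartPow l A + diag l (fiber A B x)).ncard : ℝ) * ((fiber A B x).ncard : ℝ) ^ 2) ∧
    ((A.ncard : ℝ) ^ (2 * l) *
        (∑ x : Fin k → G, if (fiber A B x).Nonempty then
            ((fiber A B x).ncard : ℝ) ^ 2 / ((cartPow l A - diag l (fiber A B x)).ncard : ℝ)
          else 0) ≤
      (Em (k + l + 1) B A : ℝ)) ∧
    ((A.ncard : ℝ) ^ (2 * l) *
        (∑ x : Fin k → G, if (fiber A B x).Nonempty then
            ((fiber A B x).ncard : ℝ) ^ 2 / ((cartPow l A + diag l (fiber A B x)).ncard : ℝ)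
          else 0) ≤
      (Em (k + l + 1) B A : ℝ)) := by
  classical
  set Af : Finset G := A.toFinset with hAf
  set Bf : Finset G := B.toFinset with hBf
  -- bridges between Set.ncard and Finset.card
  have hc2 : ∀ (C : Set G) (z : G), ({a ∈ C | a + z ∈ C}).ncard = kkC2 C.toFinset z := by
    intro C z
    rw [Set.ncard_eq_toFinset_card']
    congr 1
    ext a
    simp [kkC2]
  have hfib : ∀ x : Fin k → G, (fiber A B x).toFinset = kkFib Af Bf x := by
    intro x
    ext b
    simp [fiber, kkFib, hAf, hBf]
    exact @Set.mem_toFinset _ _ (@Subtype.fintype _ _ (fun _ => Classical.propDecidable _) _) _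
  have hfibcard : ∀ x : Fin k → G, (fiber A B x).ncard = (kkFib Af Bf x).card := by
    intro x
    rw [Set.ncard_eq_toFinset_card', hfib x]
  have hAcard : A.ncard = Af.card := Set.ncard_eq_toFinset_card' A
  have hEm : ∀ m : ℕ, Em m B A = ∑ z : G, kkC2 Bf z * kkC2 Af z ^ (m - 1) := by
    intro m
    unfold Em
    exact Finset.sum_congr rfl (fun z _ => by rw [hc2 B z, hc2 A z])
  -- energy identities
  have E1 : Em (k + 1) B A = ∑ x : Fin k → G, (kkFib Af Bf x).card ^ 2 := by
    rw [hEm, Nat.add_sub_cancel]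
    calc ∑ z : G, kkC2 Bf z * kkC2 Af z ^ k
        = ∑ z : G, ∑ x : Fin k → G, kkC2 (kkFib Af Bf x) z :=
          Finset.sum_congr rfl (fun z _ => (kk_sum_c2_fib Af Bf k z).symm)
      _ = ∑ x : Fin k → G, ∑ z : G, kkC2 (kkFib Af Bf x) z := Finset.sum_comm
      _ = ∑ x : Fin k → G, (kkFib Af Bf x).card ^ 2 :=
          Finset.sum_congr rfl (fun x _ => kk_sum_c2 _)
  have E2 : Em (k + l + 1) B A
      = ∑ x : Fin k → G, ∑ z : G, kkC2 (kkFib Af Bf x) z * kkC2 Af z ^ l := by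
    rw [hEm, Nat.add_sub_cancel]
    calc ∑ z : G, kkC2 Bf z * kkC2 Af z ^ (k + l)
        = ∑ z : G, (∑ x : Fin k → G, kkC2 (kkFib Af Bf x) z) * kkC2 Af z ^ l := by
          refine Finset.sum_congr rfl (fun z _ => ?_)
          rw [kk_sum_c2_fib Af Bf k z, pow_add, mul_assoc]
      _ = ∑ z : G, ∑ x : Fin k → G, kkC2 (kkFib Af Bf x) z * kkC2 Af z ^ l :=
          Finset.sum_congr rfl (fun z _ => Finset.sum_mul _ _ _)
      _ = ∑ x : Fin k → G, ∑ z : G, kkC2 (kkFib Af Bf x) z * kkC2 Af z ^ l := Finset.sum_comm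
  set cx : (Fin k → G) → ℕ :=
    fun x => ∑ z : G, kkC2 (kkFib Af Bf x) z * kkC2 Af z ^ l with hcx
  have E2' : Em (k + l + 1) B A = ∑ x : Fin k → G, cx x := E2
  -- the per-fiber Katz–Koester inequalities (difference version)
  have KKm : ∀ x : Fin k → G,
      (Af.card ^ l * (kkFib Af Bf x).card) ^ 2 ≤
        (cartPow l A - diag l (fiber A B x)).ncard * cx x := by
    intro x
    have h := kk_main (kkNeg) Af (kkFib Af Bf x) l
      (cartPow l A - diag l (fiber A B x)).toFinset
      (by
        intro a ha s hs
        rw [Set.mem_toFinset]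
        have hfun : (fun i => a i + kkNeg s) = a - (fun _ : Fin l => s) := by
          funext i
          simp only [Pi.sub_apply, kkNeg_apply, sub_eq_add_neg]
        rw [hfun]
        refine Set.sub_mem_sub (fun i => Set.mem_toFinset.mp (ha i)) ?_
        have hm := Finset.mem_filter.mp hs
        exact ⟨s, ⟨Set.mem_toFinset.mp hm.1, fun i => Set.mem_toFinset.mp (hm.2 i)⟩, rfl⟩)
      (fun z => by rw [kkNeg_symm_apply, neg_neg])
    calc (Af.card ^ l * (kkFib Af Bf x).card) ^ 2
        ≤ (cartPow l A - diag l (fiber A B x)).toFinset.card * cx x := h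
      _ = (cartPow l A - diag l (fiber A B x)).ncard * cx x := by
          rw [← Set.ncard_eq_toFinset_card']
  -- the per-fiber Katz–Koester inequalities (sum version)
  have KKp : ∀ x : Fin k → G,
      (Af.card ^ l * (kkFib Af Bf x).card) ^ 2 ≤
        (cartPow l A + diag l (fiber A B x)).ncard * cx x := by
    intro x
    have h := kk_main (AddEquiv.refl G) Af (kkFib Af Bf x) l
      (cartPow l A + diag l (fiber A B x)).toFinset
      (by
        intro a ha s hs
        rw [Set.mem_toFinset]
        have hfun : (fun i => a i + (AddEquiv.refl G) s) = a + (fun _ : Fin l => s) := by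
          funext i; rfl
        rw [hfun]
        refine Set.add_mem_add (fun i => Set.mem_toFinset.mp (ha i)) ?_
        have hm := Finset.mem_filter.mp hs
        exact ⟨s, ⟨Set.mem_toFinset.mp hm.1, fun i => Set.mem_toFinset.mp (hm.2 i)⟩, rfl⟩)
      (fun z => by
        have : (AddEquiv.refl G).symm (-z) = -z := rfl
        rw [this, kkC2_neg])
    calc (Af.card ^ l * (kkFib Af Bf x).card) ^ 2
        ≤ (cartPow l A + diag l (fiber A B x)).toFinset.card * cx x := h
      _ = (cartPow l A + diag l (fiber A B x)).ncard * cx x := by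
          rw [← Set.ncard_eq_toFinset_card']
  -- cast versions of the energies
  have hE1R : (Em (k + 1) B A : ℝ) = ∑ x : Fin k → G, ((kkFib Af Bf x).card : ℝ) ^ 2 := by
    rw [E1]; push_cast; rfl
  have hE2R : (Em (k + l + 1) B A : ℝ) = ∑ x : Fin k → G, (cx x : ℝ) := by
    rw [E2']; push_cast; rfl
  -- generic parts (1)-(2)
  have main12 : ∀ D : (Fin k → G) → ℕ,
      (∀ x, (Af.card ^ l * (kkFib Af Bf x).card) ^ 2 ≤ D x * cx x) →
      (A.ncard : ℝ) ^ (2 * l) * (Em (k + 1) B A : ℝ) ^ 2 ≤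
        (Em (k + l + 1) B A : ℝ) *
          ∑ x : Fin k → G, (D x : ℝ) * ((fiber A B x).ncard : ℝ) ^ 2 := by
    intro D hKK
    have hcast : ∀ x : Fin k → G,
        ((fiber A B x).ncard : ℝ) = ((kkFib Af Bf x).card : ℝ) := fun x => by
      rw [hfibcard x]
    simp only [hcast]
    have key : ∀ x ∈ Finset.univ (α := Fin k → G),
        ((Af.card : ℝ)) ^ l * ((kkFib Af Bf x).card : ℝ) ^ 2 ≤
          Real.sqrt ((D x : ℝ) * ((kkFib Af Bf x).card : ℝ) ^ 2) * Real.sqrt ((cx x : ℝ)) := by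
      intro x _
      rw [← Real.sqrt_mul (by positivity)]
      rw [show ((Af.card : ℝ)) ^ l * ((kkFib Af Bf x).card : ℝ) ^ 2 =
        Real.sqrt ((((Af.card : ℝ)) ^ l * ((kkFib Af Bf x).card : ℝ) ^ 2) ^ 2) from
        (Real.sqrt_sq (by positivity)).symm]
      apply Real.sqrt_le_sqrt
      calc (((Af.card : ℝ)) ^ l * ((kkFib Af Bf x).card : ℝ) ^ 2) ^ 2
          = (((Af.card : ℝ)) ^ l * ((kkFib Af Bf x).card : ℝ)) ^ 2 *
              ((kkFib Af Bf x).card : ℝ) ^ 2 := by ring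
        _ ≤ ((D x : ℝ) * (cx x : ℝ)) * ((kkFib Af Bf x).card : ℝ) ^ 2 := by
            apply mul_le_mul_of_nonneg_right _ (by positivity)
            exact_mod_cast hKK x
        _ = (D x : ℝ) * ((kkFib Af Bf x).card : ℝ) ^ 2 * (cx x : ℝ) := by ring
    calc (A.ncard : ℝ) ^ (2 * l) * (Em (k + 1) B A : ℝ) ^ 2
        = (∑ x : Fin k → G, ((Af.card : ℝ)) ^ l * ((kkFib Af Bf x).card : ℝ) ^ 2) ^ 2 := by
          rw [← Finset.mul_sum, ← hE1R, mul_pow, hAcard, ← pow_mul, mul_comm l 2]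
      _ ≤ (∑ x : Fin k → G,
            Real.sqrt ((D x : ℝ) * ((kkFib Af Bf x).card : ℝ) ^ 2) *
              Real.sqrt ((cx x : ℝ))) ^ 2 := by
          apply pow_le_pow_left₀ (Finset.sum_nonneg (fun x _ => by positivity))
            (Finset.sum_le_sum key)
      _ ≤ (∑ x : Fin k → G, Real.sqrt ((D x : ℝ) * ((kkFib Af Bf x).card : ℝ) ^ 2) ^ 2) *
            ∑ x : Fin k → G, Real.sqrt ((cx x : ℝ)) ^ 2 :=
          Finset.sum_mul_sq_le_sq_mul_sq _ _ _
      _ = (∑ x : Fin k → G, (D x : ℝ) * ((kkFib Af Bf x).card : ℝ) ^ 2) *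
            ∑ x : Fin k → G, (cx x : ℝ) := by
          congr 1
          · exact Finset.sum_congr rfl (fun x _ => Real.sq_sqrt (by positivity))
          · exact Finset.sum_congr rfl (fun x _ => Real.sq_sqrt (by positivity))
      _ = (Em (k + l + 1) B A : ℝ) *
            ∑ x : Fin k → G, (D x : ℝ) * ((kkFib Af Bf x).card : ℝ) ^ 2 := by
          rw [← hE2R, mul_comm]
  -- generic parts (3)-(4)
  have main34 : ∀ D : (Fin k → G) → ℕ,
      (∀ x, (Af.card ^ l * (kkFib Af Bf x).card) ^ 2 ≤ D x * cx x) →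
      (∀ x, (fiber A B x).Nonempty → 0 < D x) →
      (A.ncard : ℝ) ^ (2 * l) *
          (∑ x : Fin k → G, if (fiber A B x).Nonempty then
            ((fiber A B x).ncard : ℝ) ^ 2 / (D x : ℝ) else 0) ≤
        (Em (k + l + 1) B A : ℝ) := by
    intro D hKK hD
    rw [Finset.mul_sum, hE2R]
    apply Finset.sum_le_sum
    intro x _
    split_ifs with hne
    · have hDx : (0 : ℝ) < (D x : ℝ) := by exact_mod_cast hD x hne
      rw [hfibcard x, mul_div_assoc', div_le_iff₀ hDx]
      calc (A.ncard : ℝ) ^ (2 * l) * ((kkFib Af Bf x).card : ℝ) ^ 2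
          = (((Af.card : ℝ)) ^ l * ((kkFib Af Bf x).card : ℝ)) ^ 2 := by
            rw [hAcard]; ring
        _ ≤ (D x : ℝ) * (cx x : ℝ) := by exact_mod_cast hKK x
        _ = (cx x : ℝ) * (D x : ℝ) := mul_comm _ _
    · simp only [mul_zero]
      positivity
  -- positivity of the doubling sets
  have hposm : ∀ x : Fin k → G, (fiber A B x).Nonempty →
      0 < (cartPow l A - diag l (fiber A B x)).ncard := by
    rintro x ⟨b, hbB, hbA⟩
    have h1 : (cartPow l A).Nonempty := ⟨fun _ => b + x ⟨0, hk⟩, fun _ => hbA ⟨0, hk⟩⟩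
    have h2 : (diag l (fiber A B x)).Nonempty := ⟨fun _ => b, ⟨b, ⟨hbB, hbA⟩, rfl⟩⟩
    rw [Set.ncard_pos]
    exact h1.sub h2
  have hposp : ∀ x : Fin k → G, (fiber A B x).Nonempty →
      0 < (cartPow l A + diag l (fiber A B x)).ncard := by
    rintro x ⟨b, hbB, hbA⟩
    have h1 : (cartPow l A).Nonempty := ⟨fun _ => b + x ⟨0, hk⟩, fun _ => hbA ⟨0, hk⟩⟩
    have h2 : (diag l (fiber A B x)).Nonempty := ⟨fun _ => b, ⟨b, ⟨hbB, hbA⟩, rfl⟩⟩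
    rw [Set.ncard_pos]
    exact h1.add h2
  exact ⟨main12 _ KKm, main12 _ KKp, main34 _ KKm hposm, main34 _ KKp hposp⟩
end

section
/- Let G be a finite abelian group and A ⊆ G a nonempty set. Writing A_x := A ∩ (A − x), one has ∑_{x∈G, A_x ≠ ∅} |A_x|^2 / |A + A_x| ≤ |A|^{-2} · ∑_{x∈G} |A_x|^3, and also ∑_{x∈G, A_x ≠ ∅} |A_x|^2 / |A − A_x| ≤ |A|^{-2} · ∑_{x∈G} |A_x|^3. -/
open scoped BigOperators Pointwise Classical

/-- `A_x := A ∩ (A - x) = {a ∈ A : a + x ∈ A}`. -/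
def shiftInter {G : Type*} [AddCommGroup G] (A : Set G) (x : G) : Set G :=
  {a ∈ A | a + x ∈ A}

section Aux

variable {G : Type*} [AddCommGroup G] [Fintype G]

noncomputable def indA (A : Set G) : G → ℝ := fun a => if a ∈ A then 1 else 0

lemma indA_nonneg (A : Set G) (a : G) : 0 ≤ indA A a := by
  unfold indA; split <;> norm_num

noncomputable def Fc (A : Set G) : G → ℝ := fun x => ∑ a : G, indA A a * indA A (a + x)

lemma Fc_nonneg (A : Set G) (x : G) : 0 ≤ Fc A x :=
  Finset.sum_nonneg fun a _ => mul_nonneg (indA_nonneg A a) (indA_nonneg A _)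

lemma auxSumTranslate (f : G → ℝ) (t : G) : ∑ a : G, f (a + t) = ∑ a : G, f a :=
  Fintype.sum_equiv (Equiv.addRight t) _ _ (fun _ => rfl)

lemma auxSumSubtract (f : G → ℝ) (t : G) : ∑ a : G, f (a - t) = ∑ a : G, f a :=
  Fintype.sum_equiv (Equiv.subRight t) _ _ (fun _ => rfl)

lemma ncard_eq_sum (S : Set G) : (S.ncard : ℝ) = ∑ a : G, (if a ∈ S then (1:ℝ) else 0) := by
  classical
  have h : S.toFinset = Finset.univ.filter (· ∈ S) := by ext a; simp
  rw [Set.ncard_eq_toFinset_card', h, Finset.sum_boole]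

lemma ncard_shiftInter (A : Set G) (x : G) :
    ((shiftInter A x).ncard : ℝ) = Fc A x := by
  rw [ncard_eq_sum]
  unfold Fc indA shiftInter
  refine Finset.sum_congr rfl fun a _ => ?_
  by_cases h1 : a ∈ A <;> by_cases h2 : a + x ∈ A <;>
    simp [Set.mem_setOf_eq, h1, h2]

lemma ncard_A_eq (A : Set G) : (A.ncard : ℝ) = ∑ a : G, indA A a := by
  rw [ncard_eq_sum]; rfl

lemma Fc_neg (A : Set G) (y : G) : Fc A (-y) = Fc A y := by
  unfold Fc
  rw [← auxSumTranslate (fun a => indA A a * indA A (a + -y)) y]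
  refine Finset.sum_congr rfl fun a _ => ?_
  have h1 : a + y + -y = a := by abel
  rw [h1, mul_comm]

/-- The generic Cauchy–Schwarz step. -/
lemma cs_step (A : Set G) (x : G) (r : G → ℝ) (S : Set G)
    (hr : ∀ s, 0 ≤ r s) (hsupp : ∀ s, r s ≠ 0 → s ∈ S)
    (hsum : ∑ s : G, r s = Fc A x * (A.ncard : ℝ))
    (Qx : ℝ) (hsq : ∑ s : G, (r s) ^ 2 = Qx)
    (hS : S.Nonempty) (hApos : (0:ℝ) < (A.ncard : ℝ)) :
    Fc A x ^ 2 / (S.ncard : ℝ) ≤ ((A.ncard : ℝ) ^ 2)⁻¹ * Qx := by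
  classical
  set T : Finset G := S.toFinset with hT
  have hTcard : (T.card : ℝ) = (S.ncard : ℝ) := by
    rw [Set.ncard_eq_toFinset_card']
  have hsum' : ∑ s ∈ T, r s = Fc A x * (A.ncard : ℝ) := by
    rw [← hsum]
    refine Finset.sum_subset (Finset.subset_univ T) fun s _ hs => ?_
    by_contra h
    exact hs (by rw [hT, Set.mem_toFinset]; exact hsupp s h)
  have hsq' : ∑ s ∈ T, (r s) ^ 2 ≤ Qx := by
    rw [← hsq]
    exact Finset.sum_le_sum_of_subset_of_nonneg (Finset.subset_univ T)
      (fun s _ _ => sq_nonneg _)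
  have hcs := sq_sum_le_card_mul_sum_sq (s := T) (f := r)
  have hkey : (Fc A x * (A.ncard : ℝ)) ^ 2 ≤ (S.ncard : ℝ) * Qx := by
    rw [← hsum', ← hTcard]
    calc (∑ s ∈ T, r s) ^ 2 ≤ (T.card : ℝ) * ∑ s ∈ T, (r s) ^ 2 := hcs
      _ ≤ (T.card : ℝ) * Qx := by
          exact mul_le_mul_of_nonneg_left hsq' (by positivity)
  have hSpos : (0:ℝ) < (S.ncard : ℝ) := by
    exact_mod_cast (Set.ncard_pos (Set.toFinite S)).2 hS
  rw [div_le_iff₀ hSpos]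
  rw [mul_pow] at hkey
  rw [inv_mul_eq_div, div_mul_eq_mul_div, le_div_iff₀ (by positivity : (0:ℝ) < (A.ncard : ℝ) ^ 2)]
  nlinarith [hkey]

end Aux

theorem harmonic_sum_bound {G : Type*} [AddCommGroup G] [Fintype G]
    (A : Set G) (hA : A.Nonempty) :
    (∑ x : G, if (shiftInter A x).Nonempty then
        ((shiftInter A x).ncard : ℝ) ^ 2 / ((A + shiftInter A x).ncard : ℝ) else 0) ≤
      ((A.ncard : ℝ) ^ 2)⁻¹ * ∑ x : G, ((shiftInter A x).ncard : ℝ) ^ 3 ∧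
    (∑ x : G, if (shiftInter A x).Nonempty then
        ((shiftInter A x).ncard : ℝ) ^ 2 / ((A - shiftInter A x).ncard : ℝ) else 0) ≤
      ((A.ncard : ℝ) ^ 2)⁻¹ * ∑ x : G, ((shiftInter A x).ncard : ℝ) ^ 3 := by
  classical
  set ι : G → ℝ := indA A with hι
  set w : G → G → ℝ := fun x b => ι b * ι (b + x) with hw
  have hwnn : ∀ x b, 0 ≤ w x b := fun x b => mul_nonneg (indA_nonneg A b) (indA_nonneg A _)
  set Q : G → ℝ := fun x => ∑ b : G, ∑ b' : G, w x b * w x b' * Fc A (b - b') with hQ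
  have hQnn : ∀ x, 0 ≤ Q x := fun x =>
    Finset.sum_nonneg fun b _ => Finset.sum_nonneg fun b' _ =>
      mul_nonneg (mul_nonneg (hwnn x b) (hwnn x b')) (Fc_nonneg A _)
  have hApos : (0:ℝ) < (A.ncard : ℝ) := by
    exact_mod_cast (Set.ncard_pos (Set.toFinite A)).2 hA
  -- membership through the indicator
  have hmem : ∀ x b : G, w x b ≠ 0 → b ∈ shiftInter A x := by
    intro x b h
    rw [hw] at h
    simp only [hι, indA, mul_ne_zero_iff, ite_ne_right_iff] at h
    exact ⟨h.1.1, h.2.1⟩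
  have hind_mem : ∀ a : G, ι a ≠ 0 → a ∈ A := by
    intro a h
    simp only [hι, indA, ite_ne_right_iff] at h
    exact h.1
  -- key identity: ∑_x Q x = ∑_y Fc A y ^ 3
  have hQsum : ∑ x : G, Q x = ∑ y : G, Fc A y ^ 3 := by
    have step1 : ∀ b b' : G, (∑ x : G, w x b * w x b') = ι b * ι b' * Fc A (b - b') := by
      intro b b'
      have h1 : ∀ x : G, w x b * w x b'
          = ι b * ι b' * ((fun c => ι c * ι (c + (b - b'))) (b' + x)) := by
        intro x
        simp only [hw]
        have : b' + x + (b - b') = b + x := by abel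
        rw [this]; ring
      calc (∑ x : G, w x b * w x b')
          = ∑ x : G, ι b * ι b' * ((fun c => ι c * ι (c + (b - b'))) (x + b')) := by
            refine Finset.sum_congr rfl fun x _ => ?_
            rw [h1 x, add_comm b' x]
        _ = ι b * ι b' * ∑ x : G, (fun c => ι c * ι (c + (b - b'))) (x + b') := by
            rw [Finset.mul_sum]
        _ = ι b * ι b' * Fc A (b - b') := by
            rw [auxSumTranslate (fun c => ι c * ι (c + (b - b'))) b']
            rfl
    calc ∑ x : G, Q x
        = ∑ b : G, ∑ b' : G, (∑ x : G, w x b * w x b') * Fc A (b - b') := by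
          simp only [hQ]
          rw [Finset.sum_comm]
          refine Finset.sum_congr rfl fun b _ => ?_
          rw [Finset.sum_comm]
          refine Finset.sum_congr rfl fun b' _ => ?_
          rw [Finset.sum_mul]
      _ = ∑ b' : G, ∑ b : G, ι b * ι b' * Fc A (b - b') ^ 2 := by
          rw [Finset.sum_comm]
          refine Finset.sum_congr rfl fun b' _ => Finset.sum_congr rfl fun b _ => ?_
          rw [step1]; ring
      _ = ∑ b' : G, ∑ y : G, ι (y + b') * ι b' * Fc A y ^ 2 := by
          refine Finset.sum_congr rfl fun b' _ => ?_
          rw [← auxSumTranslate (fun b => ι b * ι b' * Fc A (b - b') ^ 2) b']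
          refine Finset.sum_congr rfl fun y _ => ?_
          simp only [add_sub_cancel_right]
      _ = ∑ y : G, Fc A y ^ 3 := by
          rw [Finset.sum_comm]
          refine Finset.sum_congr rfl fun y _ => ?_
          have : ∑ b' : G, ι (y + b') * ι b' * Fc A y ^ 2
              = (∑ b' : G, ι b' * ι (b' + y)) * Fc A y ^ 2 := by
            rw [Finset.sum_mul]
            refine Finset.sum_congr rfl fun b' _ => ?_
            rw [add_comm y b']; ring
          rw [this]
          show (Fc A y) * Fc A y ^ 2 = Fc A y ^ 3
          ring
  -- the per-x inequalities
  have hplus : ∀ x : G, (shiftInter A x).Nonempty →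
      ((shiftInter A x).ncard : ℝ) ^ 2 / ((A + shiftInter A x).ncard : ℝ)
        ≤ ((A.ncard : ℝ) ^ 2)⁻¹ * Q x := by
    intro x hx
    rw [ncard_shiftInter]
    set r : G → ℝ := fun s => ∑ b : G, w x b * ι (s - b) with hr
    refine cs_step A x r (A + shiftInter A x) ?_ ?_ ?_ (Q x) ?_ (hA.add hx) hApos
    · intro s
      exact Finset.sum_nonneg fun b _ => mul_nonneg (hwnn x b) (indA_nonneg A _)
    · intro s hs
      obtain ⟨b, _, hb⟩ := Finset.exists_ne_zero_of_sum_ne_zero hs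
      rcases mul_ne_zero_iff.1 hb with ⟨h1, h2⟩
      have h3 : s - b + b = s := by abel
      exact ⟨s - b, hind_mem _ h2, b, hmem x b h1, h3⟩
    · calc ∑ s : G, r s = ∑ b : G, ∑ s : G, w x b * ι (s - b) := Finset.sum_comm
        _ = ∑ b : G, w x b * (A.ncard : ℝ) := by
            refine Finset.sum_congr rfl fun b _ => ?_
            rw [← Finset.mul_sum, auxSumSubtract ι b, ← ncard_A_eq]
        _ = Fc A x * (A.ncard : ℝ) := by rw [← Finset.sum_mul]; rfl
    · calc ∑ s : G, r s ^ 2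
          = ∑ s : G, ∑ b : G, ∑ b' : G, w x b * w x b' * (ι (s - b) * ι (s - b')) := by
            refine Finset.sum_congr rfl fun s _ => ?_
            rw [sq, hr, Finset.sum_mul_sum]
            exact Finset.sum_congr rfl fun b _ => Finset.sum_congr rfl fun b' _ => by ring
        _ = ∑ b : G, ∑ b' : G, w x b * w x b' * ∑ s : G, ι (s - b) * ι (s - b') := by
            rw [Finset.sum_comm]
            refine Finset.sum_congr rfl fun b _ => ?_
            rw [Finset.sum_comm]
            exact Finset.sum_congr rfl fun b' _ => by rw [Finset.mul_sum]
        _ = Q x := by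
            refine Finset.sum_congr rfl fun b _ => Finset.sum_congr rfl fun b' _ => ?_
            congr 1
            rw [← auxSumTranslate (fun s => ι (s - b) * ι (s - b')) b]
            refine Finset.sum_congr rfl fun a _ => ?_
            have e1 : a + b - b = a := by abel
            have e2 : a + b - b' = a + (b - b') := by abel
            rw [e1, e2]
  have hminus : ∀ x : G, (shiftInter A x).Nonempty →
      ((shiftInter A x).ncard : ℝ) ^ 2 / ((A - shiftInter A x).ncard : ℝ)
        ≤ ((A.ncard : ℝ) ^ 2)⁻¹ * Q x := by
    intro x hx
    rw [ncard_shiftInter]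
    set r : G → ℝ := fun s => ∑ b : G, w x b * ι (s + b) with hr
    refine cs_step A x r (A - shiftInter A x) ?_ ?_ ?_ (Q x) ?_ (hA.sub hx) hApos
    · intro s
      exact Finset.sum_nonneg fun b _ => mul_nonneg (hwnn x b) (indA_nonneg A _)
    · intro s hs
      obtain ⟨b, _, hb⟩ := Finset.exists_ne_zero_of_sum_ne_zero hs
      rcases mul_ne_zero_iff.1 hb with ⟨h1, h2⟩
      have h3 : s + b - b = s := by abel
      exact ⟨s + b, hind_mem _ h2, b, hmem x b h1, h3⟩
    · calc ∑ s : G, r s = ∑ b : G, ∑ s : G, w x b * ι (s + b) := Finset.sum_comm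
        _ = ∑ b : G, w x b * (A.ncard : ℝ) := by
            refine Finset.sum_congr rfl fun b _ => ?_
            rw [← Finset.mul_sum, auxSumTranslate ι b, ← ncard_A_eq]
        _ = Fc A x * (A.ncard : ℝ) := by rw [← Finset.sum_mul]; rfl
    · calc ∑ s : G, r s ^ 2
          = ∑ s : G, ∑ b : G, ∑ b' : G, w x b * w x b' * (ι (s + b) * ι (s + b')) := by
            refine Finset.sum_congr rfl fun s _ => ?_
            rw [sq, hr, Finset.sum_mul_sum]
            exact Finset.sum_congr rfl fun b _ => Finset.sum_congr rfl fun b' _ => by ring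
        _ = ∑ b : G, ∑ b' : G, w x b * w x b' * ∑ s : G, ι (s + b) * ι (s + b') := by
            rw [Finset.sum_comm]
            refine Finset.sum_congr rfl fun b _ => ?_
            rw [Finset.sum_comm]
            exact Finset.sum_congr rfl fun b' _ => by rw [Finset.mul_sum]
        _ = Q x := by
            refine Finset.sum_congr rfl fun b _ => Finset.sum_congr rfl fun b' _ => ?_
            congr 1
            rw [← Fc_neg A (b - b'), neg_sub]
            rw [← auxSumSubtract (fun s => ι (s + b) * ι (s + b')) b]
            refine Finset.sum_congr rfl fun a _ => ?_
            have e1 : a - b + b = a := by abel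
            have e2 : a - b + b' = a + (b' - b) := by abel
            rw [e1, e2]
  -- finish
  have hRHS : ((A.ncard : ℝ) ^ 2)⁻¹ * ∑ x : G, ((shiftInter A x).ncard : ℝ) ^ 3
      = ∑ x : G, ((A.ncard : ℝ) ^ 2)⁻¹ * Q x := by
    have h1 : ∑ x : G, ((shiftInter A x).ncard : ℝ) ^ 3 = ∑ x : G, Fc A x ^ 3 :=
      Finset.sum_congr rfl fun x _ => by rw [ncard_shiftInter]
    rw [h1, ← hQsum, Finset.mul_sum]
  constructor
  · rw [hRHS]
    refine Finset.sum_le_sum fun x _ => ?_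
    split
    · exact hplus x ‹_›
    · exact mul_nonneg (by positivity) (hQnn x)
  · rw [hRHS]
    refine Finset.sum_le_sum fun x _ => ?_
    split
    · exact hminus x ‹_›
    · exact mul_nonneg (by positivity) (hQnn x)
end

section
/- Let G be a finite abelian group and A ⊆ G a nonempty set. Writing A_x := A ∩ (A − x), one has ∑_{x,y,z ∈ A} |A_{x−y}| · |A_{x−z}| · |A_{y−z}| ≥ |A|^{-3} · (∑_{x∈G} |A_x|^2)^3, i.e. the left-hand side is at least E(A)^3/|A|^3. -/
open scoped BigOperators Pointwise

theorem triple_shift_lower_bound {G : Type*} [AddCommGroup G] [Fintype G]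
    (A : Set G) (hA : A.Nonempty) :
    ((A.ncard : ℝ) ^ 3)⁻¹ * (∑ x : G, ((shiftInter A x).ncard : ℝ) ^ 2) ^ 3 ≤
      ∑ᶠ x ∈ A, ∑ᶠ y ∈ A, ∑ᶠ z ∈ A,
        ((shiftInter A (x - y)).ncard : ℝ) * ((shiftInter A (x - z)).ncard : ℝ) *
          ((shiftInter A (y - z)).ncard : ℝ) := by
  classical
  set χ : G → ℝ := fun g => if g ∈ A then 1 else 0 with hχ
  set s : Finset G := A.toFinset with hsdef
  have hcard : (A.ncard : ℝ) = (s.card : ℝ) := by rw [Set.ncard_eq_toFinset_card']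
  have hsum_s : ∀ F : G → ℝ, ∑ g : G, χ g * F g = ∑ g ∈ s, F g := by
    intro F
    rw [show s = Finset.univ.filter (fun g => g ∈ A) by ext g; simp [hsdef]]
    rw [Finset.sum_filter]
    refine Finset.sum_congr rfl fun g _ => ?_
    by_cases h : g ∈ A <;> simp [hχ, h]
  set f : G → G → ℝ := fun a b => ∑ g : G, χ (g + a) * χ (g + b) with hf
  have hsymm : ∀ a b, f a b = f b a := fun a b =>
    Finset.sum_congr rfl fun g _ => mul_comm _ _
  have hncard : ∀ x, ((shiftInter A x).ncard : ℝ) = f 0 x := by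
    intro x
    rw [Set.ncard_eq_toFinset_card']
    have h1 : (shiftInter A x).toFinset =
        Finset.univ.filter (fun g => g ∈ A ∧ g + x ∈ A) := by
      ext g; rw [Set.mem_toFinset]; simp [shiftInter]
    rw [h1, ← Finset.sum_boole]
    simp only [hf]
    refine Finset.sum_congr rfl fun g _ => ?_
    by_cases h1 : g ∈ A <;> by_cases h2 : g + x ∈ A <;> simp [hχ, h1, h2]
  have hshift : ∀ a b, f a b = f 0 (b - a) := by
    intro a b
    simp only [hf]
    rw [← Equiv.sum_comp (Equiv.addRight a) (fun g => χ (g + 0) * χ (g + (b - a)))]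
    refine Finset.sum_congr rfl fun g _ => ?_
    have e1 : (Equiv.addRight a) g + 0 = g + a := by simp
    have e2 : (Equiv.addRight a) g + (b - a) = g + b := by
      simp only [Equiv.coe_addRight]; abel
    rw [e1, e2]
  -- rewrite the finsums as finset sums
  have hfin : ∀ F : G → ℝ, ∑ᶠ x ∈ A, F x = ∑ x ∈ s, F x := by
    intro F
    conv_lhs => rw [← Set.coe_toFinset A]
    rw [finsum_mem_coe_finset, ← hsdef]
  have hfb : ∀ a b, f 0 (b - a) = f a b := fun a b => (hshift a b).symm
  simp only [hfin, hncard, hcard, hfb]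
  -- goal is now in terms of f, s
  set n : ℝ := (s.card : ℝ) with hn
  have hsne : s.Nonempty := by rw [hsdef, Set.toFinset_nonempty]; exact hA
  have hnpos : 0 < n := by
    rw [hn]; exact_mod_cast Finset.card_pos.mpr hsne
  set w : G → ℝ := fun g => ∑ a ∈ s, χ (g + a) with hw
  set u : G → ℝ := fun b => ∑ a ∈ s, f b a with hu
  set Lv : G → G → ℝ := fun a g => ∑ b ∈ s, f b a * χ (g + b) with hLv
  set Lw : G → ℝ := fun g => ∑ b ∈ s, u b * χ (g + b) with hLw
  set T : ℝ := ∑ x ∈ s, ∑ y ∈ s, ∑ z ∈ s, f y x * f z x * f z y with hT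
  set s₁ : ℝ := ∑ a ∈ s, ∑ b ∈ s, f a b with hs₁
  have hf0sum : ∀ x, f 0 x = ∑ a ∈ s, χ (a + x) := by
    intro x
    have : f 0 x = ∑ g : G, χ g * χ (g + x) := by
      simp only [hf, add_zero]
    rw [this, hsum_s (fun g => χ (g + x))]
  have hfab : ∀ a b, ∑ x : G, χ (a + x) * χ (b + x) = f a b := by
    intro a b
    simp only [hf]
    exact Finset.sum_congr rfl fun x _ => by rw [add_comm a x, add_comm b x]
  have hE : ∑ x : G, f 0 x ^ 2 = s₁ := by
    rw [hs₁]
    simp only [hf0sum, pow_two, Finset.sum_mul_sum]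
    rw [Finset.sum_comm]
    refine Finset.sum_congr rfl fun a _ => ?_
    rw [Finset.sum_comm]
    exact Finset.sum_congr rfl fun b _ => hfab a b
  have hws : ∑ g : G, w g ^ 2 = s₁ := by
    rw [hs₁]
    simp only [hw, pow_two, Finset.sum_mul_sum]
    rw [Finset.sum_comm]
    refine Finset.sum_congr rfl fun a _ => ?_
    rw [Finset.sum_comm]
  have hwu : ∀ b, ∑ g : G, χ (g + b) * w g = u b := by
    intro b
    simp only [hw, hu, Finset.mul_sum]
    rw [Finset.sum_comm]
  have h1 : ∑ g : G, w g * Lw g = ∑ b ∈ s, u b ^ 2 := by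
    simp only [hLw, Finset.mul_sum]
    rw [Finset.sum_comm]
    refine Finset.sum_congr rfl fun b _ => ?_
    have h2 : ∀ g : G, w g * (u b * χ (g + b)) = u b * (χ (g + b) * w g) :=
      fun g => by ring
    rw [Finset.sum_congr rfl fun g _ => h2 g, ← Finset.mul_sum, hwu b, pow_two]
  have hLvsum : ∀ a, ∑ g : G, (Lv a g) ^ 2 = ∑ b ∈ s, ∑ c ∈ s, f b a * f c a * f b c := by
    intro a
    simp only [hLv, pow_two, Finset.sum_mul_sum]
    rw [Finset.sum_comm]
    refine Finset.sum_congr rfl fun b _ => ?_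
    rw [Finset.sum_comm]
    refine Finset.sum_congr rfl fun c _ => ?_
    have h2 : ∀ g : G, (f b a * χ (g + b)) * (f c a * χ (g + c)) =
        f b a * f c a * (χ (g + b) * χ (g + c)) := fun g => by ring
    rw [Finset.sum_congr rfl fun g _ => h2 g, ← Finset.mul_sum]
  have h3 : ∀ g, Lw g = ∑ a ∈ s, Lv a g := by
    intro g
    simp only [hLw, hLv, hu, Finset.sum_mul]
    exact Finset.sum_comm
  have hT' : T = ∑ a ∈ s, ∑ g : G, (Lv a g) ^ 2 := by
    rw [hT]
    refine Finset.sum_congr rfl fun a _ => ?_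
    rw [hLvsum a]
    refine Finset.sum_congr rfl fun b _ => Finset.sum_congr rfl fun c _ => ?_
    rw [hsymm b c]
  have hTnn : 0 ≤ T := by
    rw [hT']
    exact Finset.sum_nonneg fun a _ => Finset.sum_nonneg fun g _ => sq_nonneg _
  have hs₁nn : 0 ≤ s₁ := by
    rw [← hws]; exact Finset.sum_nonneg fun g _ => sq_nonneg _
  set P : ℝ := ∑ b ∈ s, u b ^ 2 with hP
  set Q : ℝ := ∑ g : G, Lw g ^ 2 with hQ
  have hPnn : 0 ≤ P := Finset.sum_nonneg fun b _ => sq_nonneg _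
  have hQnn : 0 ≤ Q := Finset.sum_nonneg fun g _ => sq_nonneg _
  have hs₁u : s₁ = ∑ b ∈ s, u b := by
    rw [hs₁]
  have hI1 : s₁ ^ 2 ≤ n * P := by
    rw [hs₁u, hP, hn]
    exact sq_sum_le_card_mul_sum_sq
  have hI2 : P ^ 2 ≤ s₁ * Q := by
    rw [← h1, ← hws, hQ]
    exact Finset.sum_mul_sq_le_sq_mul_sq Finset.univ w Lw
  have hI3 : Q ≤ n * T := by
    rw [hQ, hT']
    calc ∑ g : G, Lw g ^ 2 ≤ ∑ g : G, (n * ∑ a ∈ s, (Lv a g) ^ 2) := by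
          refine Finset.sum_le_sum fun g _ => ?_
          rw [h3 g, hn]
          exact sq_sum_le_card_mul_sum_sq
      _ = n * ∑ a ∈ s, ∑ g : G, (Lv a g) ^ 2 := by
          rw [← Finset.mul_sum, Finset.sum_comm]
  -- final arithmetic
  rw [hE, inv_mul_le_iff₀ (pow_pos hnpos 3)]
  rcases eq_or_lt_of_le hs₁nn with h0 | h0
  · rw [← h0]
    simpa using mul_nonneg (pow_nonneg hnpos.le 3) hTnn
  · have key : s₁ ^ 3 * s₁ ≤ (n ^ 3 * T) * s₁ := by
      have e1 : s₁ ^ 2 * s₁ ^ 2 ≤ (n * P) * (n * P) :=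
        mul_le_mul hI1 hI1 (sq_nonneg _) (mul_nonneg hnpos.le hPnn)
      have e3 : n ^ 2 * P ^ 2 ≤ n ^ 2 * (s₁ * Q) :=
        mul_le_mul_of_nonneg_left hI2 (sq_nonneg n)
      have e4 : n ^ 2 * (s₁ * Q) ≤ n ^ 2 * (s₁ * (n * T)) :=
        mul_le_mul_of_nonneg_left
          (mul_le_mul_of_nonneg_left hI3 h0.le) (sq_nonneg n)
      calc s₁ ^ 3 * s₁ = s₁ ^ 2 * s₁ ^ 2 := by ring
        _ ≤ (n * P) * (n * P) := e1
        _ = n ^ 2 * P ^ 2 := by ring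
        _ ≤ n ^ 2 * (s₁ * Q) := e3
        _ ≤ n ^ 2 * (s₁ * (n * T)) := e4
        _ = (n ^ 3 * T) * s₁ := by ring
    exact le_of_mul_le_mul_right key h0
end

section
/- Let G be a finite abelian group, A ⊆ G a nonempty set, and let α and p be real numbers with p > 1. Writing A_x := A ∩ (A − x), one has ∑_{x ∈ A−A} |A_x|^α ≤ (E_3(A)/|A|^2)^{1/p} · (∑_{x ∈ A−A} |A ± A_x|^{1/(p−1)} · |A_x|^{(αp−2)/(p−1)})^{(p−1)/p}, for each choice of sign ± (A + A_x or A − A_x throughout). -/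
open scoped BigOperators Pointwise
open Finset

namespace MHBaux

variable {G : Type*} [AddCommGroup G] [Fintype G] [DecidableEq G]

/-- indicator -/
def ind (A : Finset G) (a : G) : ℕ := if a ∈ A then 1 else 0

def Ax (A : Finset G) (x : G) : Finset G := A.filter (fun a => a + x ∈ A)

lemma ind_nonneg (A : Finset G) (a : G) : (0:ℕ) ≤ ind A a := Nat.zero_le _

lemma ind_Ax (A : Finset G) (x b : G) : ind (Ax A x) b = ind A b * ind A (b + x) := by
  simp only [ind, Ax, Finset.mem_filter]
  split_ifs with h h1 h2 <;> simp_all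

lemma card_eq_sum_ind (A : Finset G) : A.card = ∑ a : G, ind A a := by
  simp [ind, Finset.sum_boole, Finset.filter_univ_mem]

lemma card_Ax (A : Finset G) (x : G) :
    (Ax A x).card = ∑ b : G, ind A b * ind A (b + x) := by
  rw [card_eq_sum_ind]
  exact Finset.sum_congr rfl fun b _ => ind_Ax A x b

lemma key1 (A : Finset G) (z : G) :
    ∑ x : G, (Ax (Ax A x) z).card = (Ax A z).card ^ 2 := by
  have h1 : ∀ x, (Ax (Ax A x) z).card
      = ∑ b : G, (ind A b * ind A (b + z)) * (ind A (b + x) * ind A (b + z + x)) := by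
    intro x
    rw [card_Ax]
    refine Finset.sum_congr rfl fun b _ => ?_
    rw [ind_Ax, ind_Ax]
    ring
  calc ∑ x : G, (Ax (Ax A x) z).card
      = ∑ x : G, ∑ b : G, (ind A b * ind A (b + z)) * (ind A (b + x) * ind A (b + z + x)) :=
        Finset.sum_congr rfl fun x _ => h1 x
    _ = ∑ b : G, ∑ x : G, (ind A b * ind A (b + z)) * (ind A (b + x) * ind A (b + z + x)) :=
        Finset.sum_comm
    _ = ∑ b : G, (ind A b * ind A (b + z)) * ∑ x : G, ind A (b + x) * ind A ((b + x) + z) := by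
        refine Finset.sum_congr rfl fun b _ => ?_
        rw [Finset.mul_sum]
        refine Finset.sum_congr rfl fun x _ => ?_
        rw [show b + z + x = b + x + z from by abel]
    _ = ∑ b : G, (ind A b * ind A (b + z)) * (Ax A z).card := by
        refine Finset.sum_congr rfl fun b _ => ?_
        congr 1
        rw [card_Ax]
        exact (Fintype.sum_equiv (Equiv.addLeft b).symm
          (fun y => ind A y * ind A (y + z)) (fun x => ind A (b + x) * ind A (b + x + z))
          (fun y => by simp [add_neg_cancel_left])).symm
    _ = (Ax A z).card ^ 2 := by
        rw [← Finset.sum_mul, ← card_Ax, sq]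

end MHBaux

namespace MHBaux

variable {G : Type*} [AddCommGroup G] [Fintype G] [DecidableEq G]

/-- common energy `E(A,B) = ∑_z |A_z||B_z|`. -/
def ener (A B : Finset G) : ℕ := ∑ z : G, (Ax A z).card * (Ax B z).card

lemma key1' (A : Finset G) :
    ∑ x : G, ener A (Ax A x) = ∑ z : G, (Ax A z).card ^ 3 := by
  unfold ener
  rw [Finset.sum_comm]
  refine Finset.sum_congr rfl fun z _ => ?_
  rw [← Finset.mul_sum, key1]
  ring

def rminus (A B : Finset G) (y : G) : ℕ := ∑ a : G, ind A a * ind B (a - y)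

def rplus (A B : Finset G) (y : G) : ℕ := ∑ a : G, ind A a * ind B (y - a)

lemma sum_rminus (A B : Finset G) : ∑ y : G, rminus A B y = A.card * B.card := by
  unfold rminus
  rw [Finset.sum_comm]
  calc ∑ a : G, ∑ y : G, ind A a * ind B (a - y)
      = ∑ a : G, ind A a * ∑ y : G, ind B (a - y) := by
        refine Finset.sum_congr rfl fun a _ => ?_; rw [Finset.mul_sum]
    _ = ∑ a : G, ind A a * B.card := by
        refine Finset.sum_congr rfl fun a _ => ?_
        congr 1
        rw [card_eq_sum_ind]
        exact Fintype.sum_equiv (Equiv.subLeft a) (fun y => ind B (a - y)) (fun b => ind B b)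
          (fun y => rfl)
    _ = A.card * B.card := by rw [← Finset.sum_mul, ← card_eq_sum_ind]

lemma sum_rplus (A B : Finset G) : ∑ y : G, rplus A B y = A.card * B.card := by
  unfold rplus
  rw [Finset.sum_comm]
  calc ∑ a : G, ∑ y : G, ind A a * ind B (y - a)
      = ∑ a : G, ind A a * ∑ y : G, ind B (y - a) := by
        refine Finset.sum_congr rfl fun a _ => ?_; rw [Finset.mul_sum]
    _ = ∑ a : G, ind A a * B.card := by
        refine Finset.sum_congr rfl fun a _ => ?_
        congr 1
        rw [card_eq_sum_ind]
        exact Fintype.sum_equiv (Equiv.subRight a) (fun y => ind B (y - a)) (fun b => ind B b)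
          (fun y => rfl)
    _ = A.card * B.card := by rw [← Finset.sum_mul, ← card_eq_sum_ind]

lemma rminus_support {A B : Finset G} {y : G} (h : rminus A B y ≠ 0) : y ∈ A - B := by
  obtain ⟨a, -, ha⟩ := Finset.exists_ne_zero_of_sum_ne_zero h
  have h1 : ind A a ≠ 0 := fun h0 => ha (by rw [h0, zero_mul])
  have h2 : ind B (a - y) ≠ 0 := fun h0 => ha (by rw [h0, mul_zero])
  have ha' : a ∈ A := by by_contra hc; exact h1 (if_neg hc)
  have hb' : a - y ∈ B := by by_contra hc; exact h2 (if_neg hc)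
  have : a - (a - y) ∈ A - B := Finset.sub_mem_sub ha' hb'
  simpa using this

lemma rplus_support {A B : Finset G} {y : G} (h : rplus A B y ≠ 0) : y ∈ A + B := by
  obtain ⟨a, -, ha⟩ := Finset.exists_ne_zero_of_sum_ne_zero h
  have h1 : ind A a ≠ 0 := fun h0 => ha (by rw [h0, zero_mul])
  have h2 : ind B (y - a) ≠ 0 := fun h0 => ha (by rw [h0, mul_zero])
  have ha' : a ∈ A := by by_contra hc; exact h1 (if_neg hc)
  have hb' : y - a ∈ B := by by_contra hc; exact h2 (if_neg hc)
  have : a + (y - a) ∈ A + B := Finset.add_mem_add ha' hb'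
  simpa using this

lemma ener_expand (A B : Finset G) :
    ener A B = ∑ a : G, ∑ c : G, ∑ b : G,
      (ind A a * ind B b) * (ind A c * ind B (b + (c - a))) := by
  unfold ener
  calc ∑ z : G, (Ax A z).card * (Ax B z).card
      = ∑ z : G, ∑ a : G, ∑ b : G,
          (ind A a * ind A (a + z)) * (ind B b * ind B (b + z)) := by
        refine Finset.sum_congr rfl fun z _ => ?_
        rw [card_Ax, card_Ax, Finset.sum_mul_sum]
    _ = ∑ a : G, ∑ z : G, ∑ b : G,
          (ind A a * ind A (a + z)) * (ind B b * ind B (b + z)) := Finset.sum_comm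
    _ = ∑ a : G, ∑ c : G, ∑ b : G,
          (ind A a * ind B b) * (ind A c * ind B (b + (c - a))) := by
        refine Finset.sum_congr rfl fun a _ => ?_
        refine (Fintype.sum_equiv (Equiv.subRight a)
          (fun c => ∑ b : G, (ind A a * ind B b) * (ind A c * ind B (b + (c - a))))
          (fun z => ∑ b : G, (ind A a * ind A (a + z)) * (ind B b * ind B (b + z)))
          (fun c => ?_)).symm
        refine Finset.sum_congr rfl fun b _ => ?_
        show (ind A a * ind B b) * (ind A c * ind B (b + (c - a)))
          = (ind A a * ind A (a + (c - a))) * (ind B b * ind B (b + (c - a)))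
        rw [show a + (c - a) = c from by abel]
        ring

lemma sum_sq_rminus (A B : Finset G) : ∑ y : G, (rminus A B y) ^ 2 = ener A B := by
  rw [ener_expand]
  calc ∑ y : G, (rminus A B y) ^ 2
      = ∑ y : G, ∑ a : G, ∑ c : G,
          (ind A a * ind B (a - y)) * (ind A c * ind B (c - y)) := by
        refine Finset.sum_congr rfl fun y _ => ?_
        rw [sq, rminus, Finset.sum_mul_sum]
    _ = ∑ a : G, ∑ c : G, ∑ y : G,
          (ind A a * ind B (a - y)) * (ind A c * ind B (c - y)) := by
        rw [Finset.sum_comm]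
        exact Finset.sum_congr rfl fun a _ => Finset.sum_comm
    _ = ∑ a : G, ∑ c : G, ∑ b : G,
          (ind A a * ind B b) * (ind A c * ind B (b + (c - a))) := by
        refine Finset.sum_congr rfl fun a _ => Finset.sum_congr rfl fun c _ => ?_
        refine (Fintype.sum_equiv (Equiv.subLeft a)
          (fun b => (ind A a * ind B b) * (ind A c * ind B (b + (c - a))))
          (fun y => (ind A a * ind B (a - y)) * (ind A c * ind B (c - y)))
          (fun b => ?_)).symm
        show (ind A a * ind B b) * (ind A c * ind B (b + (c - a)))
          = (ind A a * ind B (a - (a - b))) * (ind A c * ind B (c - (a - b)))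
        rw [show a - (a - b) = b from by abel, show c - (a - b) = b + (c - a) from by abel]

lemma sum_sq_rplus (A B : Finset G) : ∑ y : G, (rplus A B y) ^ 2 = ener A B := by
  rw [ener_expand]
  calc ∑ y : G, (rplus A B y) ^ 2
      = ∑ y : G, ∑ a : G, ∑ c : G,
          (ind A a * ind B (y - a)) * (ind A c * ind B (y - c)) := by
        refine Finset.sum_congr rfl fun y _ => ?_
        rw [sq, rplus, Finset.sum_mul_sum]
    _ = ∑ a : G, ∑ c : G, ∑ y : G,
          (ind A a * ind B (y - a)) * (ind A c * ind B (y - c)) := by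
        rw [Finset.sum_comm]
        exact Finset.sum_congr rfl fun a _ => Finset.sum_comm
    _ = ∑ a : G, ∑ c : G, ∑ b : G,
          (ind A a * ind B b) * (ind A c * ind B (b + (a - c))) := by
        refine Finset.sum_congr rfl fun a _ => Finset.sum_congr rfl fun c _ => ?_
        refine (Fintype.sum_equiv (Equiv.addRight a)
          (fun b => (ind A a * ind B b) * (ind A c * ind B (b + (a - c))))
          (fun y => (ind A a * ind B (y - a)) * (ind A c * ind B (y - c)))
          (fun b => ?_)).symm
        show (ind A a * ind B b) * (ind A c * ind B (b + (a - c)))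
          = (ind A a * ind B (b + a - a)) * (ind A c * ind B (b + a - c))
        rw [show b + a - a = b from by abel, show b + a - c = b + (a - c) from by abel]
    _ = ∑ a : G, ∑ c : G, ∑ b : G,
          (ind A a * ind B b) * (ind A c * ind B (b + (c - a))) := by
        rw [Finset.sum_comm]
        refine Finset.sum_congr rfl fun c _ => Finset.sum_congr rfl fun a _ =>
          Finset.sum_congr rfl fun b _ => ?_
        ring

end MHBaux

namespace MHBaux

variable {G : Type*} [AddCommGroup G] [Fintype G] [DecidableEq G]

lemma cs_general (A B : Finset G) (r : G → ℕ) (S : Finset G)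
    (hsum : ∑ y : G, r y = A.card * B.card)
    (hsq : ∑ y : G, (r y) ^ 2 = ener A B)
    (hsupp : ∀ y, r y ≠ 0 → y ∈ S) :
    ((A.card : ℝ) * B.card) ^ 2 ≤ (S.card : ℝ) * ener A B := by
  have h1 : ((A.card : ℝ) * B.card) = ∑ y ∈ S, (r y : ℝ) := by
    have h2 : ∑ y ∈ S, (r y : ℝ) = ∑ y : G, (r y : ℝ) :=
      Finset.sum_subset (Finset.subset_univ S) (fun y _ hy => by
        have : r y = 0 := by by_contra hc; exact hy (hsupp y hc)
        simp [this])
    have h3 : (∑ y : G, (r y : ℝ)) = ((A.card * B.card : ℕ) : ℝ) := by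
      exact_mod_cast congrArg (Nat.cast : ℕ → ℝ) hsum
    rw [h2, h3]; push_cast; ring
  rw [h1]
  have h4 : (∑ y : G, (r y : ℝ) ^ 2) = (ener A B : ℝ) := by exact_mod_cast hsq
  calc (∑ y ∈ S, (r y : ℝ)) ^ 2 ≤ S.card * ∑ y ∈ S, (r y : ℝ) ^ 2 :=
        sq_sum_le_card_mul_sum_sq
    _ ≤ S.card * ∑ y : G, (r y : ℝ) ^ 2 := by
        refine mul_le_mul_of_nonneg_left ?_ (by positivity)
        exact Finset.sum_le_sum_of_subset_of_nonneg (Finset.subset_univ S)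
          (fun y _ _ => by positivity)
    _ = (S.card : ℝ) * ener A B := by rw [h4]

lemma cs_minus (A B : Finset G) :
    ((A.card : ℝ) * B.card) ^ 2 ≤ ((A - B).card : ℝ) * ener A B :=
  cs_general A B (rminus A B) (A - B) (sum_rminus A B) (sum_sq_rminus A B)
    (fun _ h => rminus_support h)

lemma cs_plus (A B : Finset G) :
    ((A.card : ℝ) * B.card) ^ 2 ≤ ((A + B).card : ℝ) * ener A B :=
  cs_general A B (rplus A B) (A + B) (sum_rplus A B) (sum_sq_rplus A B)
    (fun _ h => rplus_support h)

end MHBaux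

namespace MHBaux

variable {G : Type*} [AddCommGroup G] [Fintype G] [DecidableEq G]

lemma main_aux (F : Finset G) (hF : F.Nonempty) (α p : ℝ) (hp : 1 < p)
    (K : G → ℕ)
    (hCS : ∀ x : G, ((F.card : ℝ) * ((Ax F x).card : ℝ)) ^ 2
      ≤ (K x : ℝ) * (ener F (Ax F x) : ℝ)) :
    ∑ x ∈ F - F, ((Ax F x).card : ℝ) ^ α ≤
      ((∑ x : G, ((Ax F x).card : ℝ) ^ (3 : ℕ)) / (F.card : ℝ) ^ 2) ^ (1 / p) *
        (∑ x ∈ F - F, (K x : ℝ) ^ (1 / (p - 1)) *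
          ((Ax F x).card : ℝ) ^ ((α * p - 2) / (p - 1))) ^ ((p - 1) / p) := by
  have hp0 : (0:ℝ) < p := lt_trans one_pos hp
  have hpne : p ≠ 0 := ne_of_gt hp0
  have hp1 : (0:ℝ) < p - 1 := sub_pos.mpr hp
  have hp1ne : p - 1 ≠ 0 := ne_of_gt hp1
  set q : ℝ := p / (p - 1) with hq
  have hpq : p.HolderConjugate q := Real.HolderConjugate.conjExponent hp
  have hq0 : 0 < q := hpq.symm.pos
  have hFc : (0:ℝ) < (F.card : ℝ) := by
    exact_mod_cast Finset.card_pos.mpr hF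
  -- the two Hölder functions
  set f : G → ℝ := fun x => ((ener F (Ax F x) : ℝ) / (F.card : ℝ) ^ 2) ^ (1/p) with hf
  set g : G → ℝ := fun x => (K x : ℝ) ^ (1/p) * ((Ax F x).card : ℝ) ^ ((α * p - 2)/p) with hg
  have hf0 : ∀ x, 0 ≤ f x := fun x => Real.rpow_nonneg (by positivity) _
  have hg0 : ∀ x, 0 ≤ g x := fun x => mul_nonneg (Real.rpow_nonneg (by positivity) _)
    (Real.rpow_nonneg (by positivity) _)
  -- pointwise bound on F - F
  have claim : ∀ x ∈ F - F, ((Ax F x).card : ℝ) ^ α ≤ f x * g x := by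
    intro x hx
    set N : ℝ := ((Ax F x).card : ℝ) with hN
    have hNpos : (0:ℝ) < N := by
      obtain ⟨a, ha, b, hb, rfl⟩ := Finset.mem_sub.mp hx
      have : b ∈ Ax F (a - b) := Finset.mem_filter.mpr ⟨hb, by simpa using ha⟩
      have h5 : 0 < (Ax F (a - b)).card := Finset.card_pos.mpr ⟨b, this⟩
      rw [hN]; exact_mod_cast h5
    set e : ℝ := (ener F (Ax F x) : ℝ) with he
    set Kr : ℝ := (K x : ℝ) with hKr
    have he0 : (0:ℝ) ≤ e := Nat.cast_nonneg _
    have hK0 : (0:ℝ) ≤ Kr := Nat.cast_nonneg _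
    have hfg : f x * g x = (Kr * e) ^ (1/p) * N ^ ((α * p - 2)/p) / (((F.card:ℝ)^2) ^ (1/p)) := by
      simp only [hf, hg]
      rw [Real.div_rpow he0 (by positivity), Real.mul_rpow hK0 he0]
      ring
    rw [hfg, le_div_iff₀ (by positivity)]
    have h1 : N ^ α * ((F.card:ℝ)^2) ^ (1/p)
        = (((F.card:ℝ) * N)^2) ^ (1/p) * N ^ ((α * p - 2)/p) := by
      rw [mul_pow, Real.mul_rpow (by positivity) (by positivity),
        ← Real.rpow_natCast N 2, ← Real.rpow_mul hNpos.le, mul_assoc,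
        ← Real.rpow_add hNpos]
      rw [show ((2:ℕ):ℝ) * (1/p) + (α * p - 2)/p = α from by
        push_cast; field_simp; ring]
      ring
    calc N ^ α * ((F.card:ℝ)^2) ^ (1/p)
        = (((F.card:ℝ) * N)^2) ^ (1/p) * N ^ ((α * p - 2)/p) := h1
      _ ≤ (Kr * e) ^ (1/p) * N ^ ((α * p - 2)/p) := by
          refine mul_le_mul_of_nonneg_right ?_ (Real.rpow_nonneg hNpos.le _)
          exact Real.rpow_le_rpow (by positivity) (hCS x) (by positivity)
  -- Hölder
  have holder : ∑ x ∈ F - F, ((Ax F x).card : ℝ) ^ α ≤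
      (∑ x ∈ F - F, f x ^ p) ^ (1/p) * (∑ x ∈ F - F, g x ^ q) ^ (1/q) := by
    calc ∑ x ∈ F - F, ((Ax F x).card : ℝ) ^ α ≤ ∑ x ∈ F - F, f x * g x :=
          Finset.sum_le_sum claim
      _ ≤ (∑ x ∈ F - F, |f x| ^ p) ^ (1/p) * (∑ x ∈ F - F, |g x| ^ q) ^ (1/q) :=
          Real.inner_le_Lp_mul_Lq (F - F) f g hpq
      _ = (∑ x ∈ F - F, f x ^ p) ^ (1/p) * (∑ x ∈ F - F, g x ^ q) ^ (1/q) := by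
          rw [show (∑ x ∈ F - F, |f x| ^ p) = ∑ x ∈ F - F, f x ^ p from
              Finset.sum_congr rfl fun x _ => by rw [abs_of_nonneg (hf0 x)],
            show (∑ x ∈ F - F, |g x| ^ q) = ∑ x ∈ F - F, g x ^ q from
              Finset.sum_congr rfl fun x _ => by rw [abs_of_nonneg (hg0 x)]]
  -- first factor
  have first : (∑ x ∈ F - F, f x ^ p) ^ (1/p) ≤
      ((∑ x : G, ((Ax F x).card : ℝ) ^ (3 : ℕ)) / (F.card : ℝ) ^ 2) ^ (1/p) := by
    refine Real.rpow_le_rpow (Finset.sum_nonneg fun x _ => Real.rpow_nonneg (hf0 x) p) ?_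
      (by positivity)
    have hfp : ∀ x, f x ^ p = (ener F (Ax F x) : ℝ) / (F.card : ℝ) ^ 2 := by
      intro x
      simp only [hf]
      rw [one_div, Real.rpow_inv_rpow (by positivity) hpne]
    calc ∑ x ∈ F - F, f x ^ p
        = ∑ x ∈ F - F, (ener F (Ax F x) : ℝ) / (F.card : ℝ) ^ 2 :=
          Finset.sum_congr rfl fun x _ => hfp x
      _ ≤ ∑ x : G, (ener F (Ax F x) : ℝ) / (F.card : ℝ) ^ 2 :=
          Finset.sum_le_sum_of_subset_of_nonneg (Finset.subset_univ _)
            (fun x _ _ => by positivity)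
      _ = (∑ x : G, ((Ax F x).card : ℝ) ^ (3 : ℕ)) / (F.card : ℝ) ^ 2 := by
          rw [← Finset.sum_div]
          congr 1
          have := key1' F
          have hcast : (∑ x : G, (ener F (Ax F x) : ℝ)) = ∑ z : G, ((Ax F z).card : ℝ) ^ 3 := by
            exact_mod_cast congrArg (Nat.cast : ℕ → ℝ) this
          exact hcast
  -- second factor
  have second : (∑ x ∈ F - F, g x ^ q) ^ (1/q)
      = (∑ x ∈ F - F, (K x : ℝ) ^ (1 / (p - 1)) *
          ((Ax F x).card : ℝ) ^ ((α * p - 2) / (p - 1))) ^ ((p - 1) / p) := by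
    have hgq : ∀ x, g x ^ q = (K x : ℝ) ^ (1 / (p - 1)) *
        ((Ax F x).card : ℝ) ^ ((α * p - 2) / (p - 1)) := by
      intro x
      simp only [hg]
      rw [Real.mul_rpow (Real.rpow_nonneg (by positivity) _) (Real.rpow_nonneg (by positivity) _),
        ← Real.rpow_mul (by positivity), ← Real.rpow_mul (by positivity)]
      rw [show 1/p * q = 1/(p-1) from by rw [hq]; field_simp,
        show (α * p - 2)/p * q = (α * p - 2)/(p-1) from by rw [hq]; field_simp]
    rw [Finset.sum_congr rfl fun x _ => hgq x]
    congr 1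
    rw [hq, one_div_div]
  calc ∑ x ∈ F - F, ((Ax F x).card : ℝ) ^ α
      ≤ (∑ x ∈ F - F, f x ^ p) ^ (1/p) * (∑ x ∈ F - F, g x ^ q) ^ (1/q) := holder
    _ ≤ ((∑ x : G, ((Ax F x).card : ℝ) ^ (3 : ℕ)) / (F.card : ℝ) ^ 2) ^ (1/p) *
        (∑ x ∈ F - F, (K x : ℝ) ^ (1 / (p - 1)) *
          ((Ax F x).card : ℝ) ^ ((α * p - 2) / (p - 1))) ^ ((p - 1) / p) := by
        rw [← second]
        exact mul_le_mul_of_nonneg_right first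
          (Real.rpow_nonneg (Finset.sum_nonneg fun x _ => Real.rpow_nonneg (hg0 x) q) _)

end MHBaux

theorem moment_Holder_bound {G : Type*} [AddCommGroup G] [Fintype G]
    (A : Set G) (hA : A.Nonempty) (α p : ℝ) (hp : 1 < p) :
    ((∑ᶠ x ∈ (A - A), ((shiftInter A x).ncard : ℝ) ^ α) ≤
      ((∑ x : G, ((shiftInter A x).ncard : ℝ) ^ (3 : ℕ)) / (A.ncard : ℝ) ^ 2) ^ (1 / p) *
        (∑ᶠ x ∈ (A - A), ((A + shiftInter A x).ncard : ℝ) ^ (1 / (p - 1)) *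
          ((shiftInter A x).ncard : ℝ) ^ ((α * p - 2) / (p - 1))) ^ ((p - 1) / p)) ∧
    ((∑ᶠ x ∈ (A - A), ((shiftInter A x).ncard : ℝ) ^ α) ≤
      ((∑ x : G, ((shiftInter A x).ncard : ℝ) ^ (3 : ℕ)) / (A.ncard : ℝ) ^ 2) ^ (1 / p) *
        (∑ᶠ x ∈ (A - A), ((A - shiftInter A x).ncard : ℝ) ^ (1 / (p - 1)) *
          ((shiftInter A x).ncard : ℝ) ^ ((α * p - 2) / (p - 1))) ^ ((p - 1) / p)) := by
  classical
  have hfin : A.Finite := Set.toFinite A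
  set F : Finset G := hfin.toFinset with hFdef
  have coeF : (F : Set G) = A := hfin.coe_toFinset
  have hF : F.Nonempty := hfin.toFinset_nonempty.mpr hA
  have hshift : ∀ x : G, shiftInter A x = ↑(MHBaux.Ax F x) := by
    intro x; ext a
    simp [shiftInter, MHBaux.Ax, hFdef, Set.Finite.mem_toFinset, Set.mem_setOf_eq]
  have hncard : ∀ x : G, (shiftInter A x).ncard = (MHBaux.Ax F x).card := by
    intro x; rw [hshift x, Set.ncard_coe_finset]
  have hAA : (A - A : Set G) = ↑(F - F) := by rw [Finset.coe_sub, coeF]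
  have hAncard : A.ncard = F.card := by rw [← coeF, Set.ncard_coe_finset]
  have hplus : ∀ x : G, (A + shiftInter A x).ncard = (F + MHBaux.Ax F x).card := by
    intro x
    rw [show A + shiftInter A x = ↑(F + MHBaux.Ax F x) by
      rw [Finset.coe_add, coeF, hshift x], Set.ncard_coe_finset]
  have hminus : ∀ x : G, (A - shiftInter A x).ncard = (F - MHBaux.Ax F x).card := by
    intro x
    rw [show A - shiftInter A x = ↑(F - MHBaux.Ax F x) by
      rw [Finset.coe_sub, coeF, hshift x], Set.ncard_coe_finset]
  constructor
  · have h := MHBaux.main_aux F hF α p hp (fun x => (F + MHBaux.Ax F x).card)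
      (fun x => MHBaux.cs_plus F (MHBaux.Ax F x))
    rw [hAA, finsum_mem_coe_finset, finsum_mem_coe_finset]
    simp only [hncard, hplus, hAncard]
    exact h
  · have h := MHBaux.main_aux F hF α p hp (fun x => (F - MHBaux.Ax F x).card)
      (fun x => MHBaux.cs_minus F (MHBaux.Ax F x))
    rw [hAA, finsum_mem_coe_finset, finsum_mem_coe_finset]
    simp only [hncard, hminus, hAncard]
    exact h
end

section
/- Let G be a finite abelian group, A ⊆ G a nonempty set, and ψ : G → ℝ a positive definite function. Then ∑_{x,y,z ∈ A} ψ(x−y)·ψ(x−z)·ψ(y−z) is at least each of the following three quantities: (1) |A|^{-3} · (∑_{x∈G} ψ(x)·|A ∩ (A−x)|)^3, (2) ψ(0)^3 · |A|, and (3) |A|^{-1/2} · (∑_{x∈G} ψ(x)^2 · |A ∩ (A−x)|)^{3/2}. -/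
open scoped BigOperators Pointwise ComplexOrder

/-- A function `ψ : G → ℝ` on a finite abelian group is positive definite if
`∑_{x,y} ψ(x-y) u(x) conj(u(y)) ≥ 0` (as a real number) for every `u : G → ℂ`. -/
def IsPosDef {G : Type*} [AddCommGroup G] [Fintype G] (ψ : G → ℝ) : Prop :=
  ∀ u : G → ℂ, (0 : ℂ) ≤ ∑ x : G, ∑ y : G, (ψ (x - y) : ℂ) * u x * (starRingEnd ℂ) (u y)

open Finset Matrix

lemma aux_chain2 {a b c n : ℝ} (ha : 0 ≤ a) (hb : 0 ≤ b) (hc : 0 ≤ c) (hn : 0 ≤ n)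
    (h1 : a ^ 2 ≤ n * b) (h2 : b ^ 2 ≤ a * c) : a ^ 3 ≤ n ^ 2 * c ∧ b ^ 3 ≤ n * c ^ 2 := by
  constructor
  · rcases eq_or_lt_of_le ha with h | h
    · have h0 : a ^ 3 = 0 := by rw [← h]; ring
      rw [h0]; positivity
    · have h4 : a * a ^ 3 ≤ a * (n ^ 2 * c) := by nlinarith [sq_nonneg (n * b)]
      exact le_of_mul_le_mul_left h4 h
  · rcases eq_or_lt_of_le hb with h | h
    · have h0 : b ^ 3 = 0 := by rw [← h]; ring
      rw [h0]; positivity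
    · have h4 : b * b ^ 3 ≤ b * (n * c ^ 2) := by nlinarith [sq_nonneg (a * c)]
      exact le_of_mul_le_mul_left h4 h

theorem aux_matrix_core {ι : Type*} [Fintype ι] [DecidableEq ι] (M : Matrix ι ι ℝ)
    (hM : M.PosSemidef) :
    0 ≤ ∑ i, ∑ j, ∑ k, M i j * M j k * M k i ∧
    (∑ i, ∑ j, M i j) ^ 3 ≤ (Fintype.card ι : ℝ) ^ 3 * ∑ i, ∑ j, ∑ k, M i j * M j k * M k i ∧
    (∑ i, M i i) ^ 3 ≤ (Fintype.card ι : ℝ) ^ 2 * ∑ i, ∑ j, ∑ k, M i j * M j k * M k i ∧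
    (∑ i, ∑ j, M i j ^ 2) ^ 3 ≤
      (Fintype.card ι : ℝ) * (∑ i, ∑ j, ∑ k, M i j * M j k * M k i) ^ 2 := by
  have hMsym : ∀ i j, M i j = M j i := fun i j =>
    ((star_trivial _).symm.trans (hM.isHermitian.apply i j)).symm
  obtain ⟨P, hPsym, hMP⟩ : ∃ P : Matrix ι ι ℝ,
      (∀ i j, P i j = P j i) ∧ ∀ i j, (∑ k, P i k * P k j) = M i j := by
    obtain ⟨X, hX, -, hXM⟩ := open scoped MatrixOrder in
      CFC.exists_sqrt_of_isSelfAdjoint_of_quasispectrumRestricts (a := M) hM.isHermitian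
        (QuasispectrumRestricts.nnreal_of_nonneg hM.nonneg)
    refine ⟨X, fun i j =>
      ((star_trivial _).symm.trans ((show X.IsHermitian from hX).apply i j)).symm, fun i j => ?_⟩
    have h := congrFun (congrFun hXM i) j
    rwa [Matrix.mul_apply] at h
  have hcontr : ∀ k l, (∑ j, P k j * P l j) = M k l := fun k l => by
    rw [← hMP k l]
    exact Finset.sum_congr rfl fun j _ => congrArg (P k j * ·) (hPsym l j)
  obtain ⟨Q, hQ⟩ : ∃ Q : ι → ι → ℝ, ∀ i j, Q i j = ∑ k, M i k * P k j := ⟨_, fun _ _ => rfl⟩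
  obtain ⟨w, hw⟩ : ∃ w : ι → ℝ, ∀ i, w i = ∑ j, P i j := ⟨_, fun _ => rfl⟩
  obtain ⟨u, hu⟩ : ∃ u : ι → ℝ, ∀ i, u i = ∑ j, Q i j := ⟨_, fun _ => rfl⟩
  obtain ⟨m, hm⟩ : ∃ m : ι → ℝ, ∀ i, m i = ∑ j, M i j := ⟨_, fun _ => rfl⟩
  set n : ℝ := (Fintype.card ι : ℝ) with hndef
  have hn : 0 ≤ n := by positivity
  -- identities
  have hB : ∀ i, ∑ j, P i j ^ 2 = M i i := fun i => by
    rw [← hMP i i]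
    exact Finset.sum_congr rfl fun j _ => by rw [sq, hPsym j i]
  have hA2 : ∀ i, (∑ j, P i j * Q i j) = ∑ j, M i j ^ 2 := fun i => by
    calc ∑ j, P i j * Q i j = ∑ j, ∑ k, M i k * (P i j * P k j) := by
          refine Finset.sum_congr rfl fun j _ => ?_
          rw [hQ, Finset.mul_sum]
          exact Finset.sum_congr rfl fun k _ => by ring
      _ = ∑ k, ∑ j, M i k * (P i j * P k j) := Finset.sum_comm
      _ = ∑ j, M i j ^ 2 := Finset.sum_congr rfl fun k _ => by
          rw [← Finset.mul_sum, hcontr i k, sq]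
  have hC : ∀ i, (∑ j, Q i j ^ 2) = ∑ j, ∑ k, M i j * M j k * M k i := fun i => by
    calc ∑ j, Q i j ^ 2 = ∑ j, ∑ k, ∑ l, (M i k * P k j) * (M i l * P l j) := by
          refine Finset.sum_congr rfl fun j _ => ?_
          rw [hQ, sq, Finset.sum_mul_sum]
      _ = ∑ k, ∑ j, ∑ l, (M i k * P k j) * (M i l * P l j) := Finset.sum_comm
      _ = ∑ k, ∑ l, ∑ j, (M i k * P k j) * (M i l * P l j) :=
          Finset.sum_congr rfl fun k _ => Finset.sum_comm
      _ = ∑ k, ∑ l, (M i k * M i l) * M k l := by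
          refine Finset.sum_congr rfl fun k _ => Finset.sum_congr rfl fun l _ => ?_
          rw [← hcontr k l, Finset.mul_sum]
          exact Finset.sum_congr rfl fun j _ => by ring
      _ = ∑ j, ∑ k, M i j * M j k * M k i := by
          refine Finset.sum_congr rfl fun j _ => Finset.sum_congr rfl fun k _ => ?_
          rw [hMsym k i]; ring
  have hD : (∑ i, ∑ j, M i j) = ∑ k, w k ^ 2 := by
    calc ∑ i, ∑ j, M i j = ∑ i, ∑ j, ∑ k, P i k * P k j :=
          Finset.sum_congr rfl fun i _ => Finset.sum_congr rfl fun j _ => (hMP i j).symm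
      _ = ∑ i, ∑ k, ∑ j, P i k * P k j := Finset.sum_congr rfl fun i _ => Finset.sum_comm
      _ = ∑ k, ∑ i, ∑ j, P i k * P k j := Finset.sum_comm
      _ = ∑ k, (∑ i, P i k) * (∑ j, P k j) :=
          Finset.sum_congr rfl fun k _ => (Finset.sum_mul_sum _ _ _ _).symm
      _ = ∑ k, w k ^ 2 := by
          refine Finset.sum_congr rfl fun k _ => ?_
          rw [sq, hw]
          congr 1
          exact Finset.sum_congr rfl fun i _ => hPsym i k
  have hE : ∀ i, u i = ∑ k, M i k * w k := fun i => by
    calc u i = ∑ j, ∑ k, M i k * P k j := by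
          rw [hu]; exact Finset.sum_congr rfl fun j _ => hQ i j
      _ = ∑ k, ∑ j, M i k * P k j := Finset.sum_comm
      _ = ∑ k, M i k * w k := Finset.sum_congr rfl fun k _ => by rw [hw, Finset.mul_sum]
  have hG : ∀ i, m i = ∑ a, P i a * w a := fun i => by
    calc m i = ∑ j, ∑ a, P i a * P a j := by
          rw [hm]; exact Finset.sum_congr rfl fun j _ => (hMP i j).symm
      _ = ∑ a, ∑ j, P i a * P a j := Finset.sum_comm
      _ = ∑ a, P i a * w a := Finset.sum_congr rfl fun a _ => by rw [hw, Finset.mul_sum]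
  have hF : (∑ i, w i * u i) = ∑ i, m i ^ 2 := by
    calc ∑ i, w i * u i = ∑ i, ∑ k, ∑ a, (P i a * w i) * (P a k * w k) := by
          refine Finset.sum_congr rfl fun i _ => ?_
          rw [hE i, Finset.mul_sum]
          refine Finset.sum_congr rfl fun k _ => ?_
          rw [← hMP i k, Finset.sum_mul, Finset.mul_sum]
          exact Finset.sum_congr rfl fun a _ => by ring
      _ = ∑ i, ∑ a, ∑ k, (P i a * w i) * (P a k * w k) :=
          Finset.sum_congr rfl fun i _ => Finset.sum_comm
      _ = ∑ a, ∑ i, ∑ k, (P i a * w i) * (P a k * w k) := Finset.sum_comm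
      _ = ∑ a, (∑ i, P i a * w i) * (∑ k, P a k * w k) :=
          Finset.sum_congr rfl fun a _ => (Finset.sum_mul_sum _ _ _ _).symm
      _ = ∑ a, m a ^ 2 := by
          refine Finset.sum_congr rfl fun a _ => ?_
          rw [hG a, sq]
          congr 1
          exact Finset.sum_congr rfl fun i _ => by rw [hPsym i a]
  -- abbreviations for sums
  have e1 : (∑ p : ι × ι, P p.1 p.2 * Q p.1 p.2) = ∑ i, ∑ j, M i j ^ 2 := by
    rw [Fintype.sum_prod_type]
    exact Finset.sum_congr rfl fun i _ => hA2 i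
  have e2 : (∑ p : ι × ι, P p.1 p.2 ^ 2) = ∑ i, M i i := by
    rw [Fintype.sum_prod_type]
    exact Finset.sum_congr rfl fun i _ => hB i
  have e3 : (∑ p : ι × ι, Q p.1 p.2 ^ 2) = ∑ i, ∑ j, ∑ k, M i j * M j k * M k i := by
    rw [Fintype.sum_prod_type]
    exact Finset.sum_congr rfl fun i _ => hC i
  -- nonnegativity
  have hT0 : 0 ≤ ∑ i, ∑ j, ∑ k, M i j * M j k * M k i := by rw [← e3]; positivity
  have hq0 : 0 ≤ ∑ i, ∑ j, M i j := by rw [hD]; positivity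
  have ht10 : 0 ≤ ∑ i, M i i := by rw [← e2]; positivity
  have ht20 : 0 ≤ ∑ i, ∑ j, M i j ^ 2 := by positivity
  have hr0 : 0 ≤ ∑ i, m i ^ 2 := by positivity
  have hs0 : 0 ≤ ∑ i, u i ^ 2 := by positivity
  -- Cauchy-Schwarz steps
  have CS1 : (∑ i, ∑ j, M i j ^ 2) ^ 2 ≤
      (∑ i, M i i) * ∑ i, ∑ j, ∑ k, M i j * M j k * M k i := by
    have h := Finset.sum_mul_sq_le_sq_mul_sq (univ : Finset (ι × ι))
      (fun p => P p.1 p.2) (fun p => Q p.1 p.2)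
    rwa [e1, e2, e3] at h
  have CS2 : (∑ i, m i ^ 2) ^ 2 ≤ (∑ i, ∑ j, M i j) * ∑ i, u i ^ 2 := by
    have h := Finset.sum_mul_sq_le_sq_mul_sq (univ : Finset ι) w u
    have hw2 : (∑ i, w i ^ 2) = ∑ i, ∑ j, M i j := hD.symm
    rwa [hF, hw2] at h
  have CS3 : (∑ i, ∑ j, M i j) ^ 2 ≤ n * ∑ i, m i ^ 2 := by
    have h := sq_sum_le_card_mul_sum_sq (s := (univ : Finset ι)) (f := m)
    rw [Finset.card_univ] at h
    calc (∑ i, ∑ j, M i j) ^ 2 = (∑ i, m i) ^ 2 := by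
          rw [Finset.sum_congr rfl fun i _ => (hm i).symm]
      _ ≤ n * ∑ i, m i ^ 2 := h
  have CS4 : (∑ i, M i i) ^ 2 ≤ n * ∑ i, ∑ j, M i j ^ 2 := by
    have h := sq_sum_le_card_mul_sum_sq (s := (univ : Finset ι)) (f := fun i => M i i)
    rw [Finset.card_univ] at h
    refine h.trans (mul_le_mul_of_nonneg_left ?_ hn)
    exact Finset.sum_le_sum fun i _ =>
      Finset.single_le_sum (f := fun j => M i j ^ 2) (fun j _ => sq_nonneg _) (Finset.mem_univ i)
  have CS5 : (∑ i, u i ^ 2) ≤ n * ∑ i, ∑ j, ∑ k, M i j * M j k * M k i := by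
    calc ∑ i, u i ^ 2 ≤ ∑ i, n * ∑ j, Q i j ^ 2 := by
          refine Finset.sum_le_sum fun i _ => ?_
          rw [hu]
          have h := sq_sum_le_card_mul_sum_sq (s := (univ : Finset ι)) (f := Q i)
          rwa [Finset.card_univ] at h
      _ = n * ∑ i, ∑ j, Q i j ^ 2 := by rw [← Finset.mul_sum]
      _ = n * ∑ i, ∑ j, ∑ k, M i j * M j k * M k i := by
          rw [Finset.sum_congr rfl fun i _ => hC i]
  -- conclude
  refine ⟨hT0, ?_, ?_, ?_⟩
  · have h := (aux_chain2 hq0 hr0 hs0 hn CS3 CS2).1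
    calc (∑ i, ∑ j, M i j) ^ 3 ≤ n ^ 2 * ∑ i, u i ^ 2 := h
      _ ≤ n ^ 2 * (n * ∑ i, ∑ j, ∑ k, M i j * M j k * M k i) :=
          mul_le_mul_of_nonneg_left CS5 (by positivity)
      _ = n ^ 3 * ∑ i, ∑ j, ∑ k, M i j * M j k * M k i := by ring
  · exact (aux_chain2 ht10 ht20 hT0 hn CS4 CS1).1
  · exact (aux_chain2 ht10 ht20 hT0 hn CS4 CS1).2

-- summing an indicator over the whole group
lemma aux_sum_ite_mem {G : Type*} [Fintype G] {A : Set G} [DecidablePred (· ∈ A)] [Fintype ↥A]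
    {M : Type*} [AddCommMonoid M] (f : G → M) :
    ∑ x : G, (if x ∈ A then f x else 0) = ∑ a : ↥A, f ↑a := by
  classical
  rw [← Finset.sum_filter]
  exact Finset.sum_subtype _ (by simp) f

lemma aux_ncard_shiftInter {G : Type*} [AddCommGroup G] [Fintype G] (A : Set G)
    [DecidablePred (· ∈ A)] [Fintype ↥A] (x : G) :
    ((shiftInter A x).ncard : ℝ) = ∑ a : ↥A, (if (↑a + x) ∈ A then (1 : ℝ) else 0) := by
  classical
  have h1 : shiftInter A x = ↑(A.toFinset.filter (fun a => a + x ∈ A)) := by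
    ext g; simp [shiftInter, Set.mem_toFinset]
  rw [h1, Set.ncard_coe_finset, Finset.card_filter]
  rw [Nat.cast_sum]
  simp only [Nat.cast_ite, Nat.cast_one, Nat.cast_zero]
  exact Finset.sum_subtype _ (fun g => Set.mem_toFinset) _

lemma aux_sum_shift {G : Type*} [AddCommGroup G] [Fintype G] (A : Set G)
    [DecidablePred (· ∈ A)] [Fintype ↥A] (φ : G → ℝ) :
    ∑ x : G, φ x * ((shiftInter A x).ncard : ℝ) = ∑ a : ↥A, ∑ b : ↥A, φ (↑b - ↑a) := by
  classical
  calc ∑ x : G, φ x * ((shiftInter A x).ncard : ℝ)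
      = ∑ x : G, ∑ a : ↥A, (if (↑a + x) ∈ A then φ x else 0) := by
        refine Finset.sum_congr rfl fun x _ => ?_
        rw [aux_ncard_shiftInter, Finset.mul_sum]
        exact Finset.sum_congr rfl fun a _ => by rw [mul_ite, mul_one, mul_zero]
    _ = ∑ a : ↥A, ∑ x : G, (if (↑a + x) ∈ A then φ x else 0) := Finset.sum_comm
    _ = ∑ a : ↥A, ∑ b : ↥A, φ (↑b - ↑a) := by
        refine Finset.sum_congr rfl fun a _ => ?_
        have h := Equiv.sum_comp (Equiv.addLeft (a : G))
          (fun y => if y ∈ A then φ (y - ↑a) else 0)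
        simp only [Equiv.coe_addLeft, add_sub_cancel_left] at h
        rw [h]
        exact aux_sum_ite_mem _

lemma aux_finsum_mem {G : Type*} [Fintype G] (A : Set G) [DecidablePred (· ∈ A)] [Fintype ↥A]
    (f : G → ℝ) : ∑ᶠ x ∈ A, f x = ∑ a : ↥A, f ↑a := by
  classical
  have h1 : ∑ᶠ x ∈ A, f x = ∑ x ∈ A.toFinset, f x := by
    conv_lhs => rw [← Set.coe_toFinset A]
    exact finsum_mem_coe_finset f A.toFinset
  rw [h1]
  exact Finset.sum_subtype _ (fun g => Set.mem_toFinset) f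

lemma aux_even {G : Type*} [AddCommGroup G] [Fintype G] {ψ : G → ℝ} (hψ : IsPosDef ψ)
    (t : G) : ψ (-t) = ψ t := by
  classical
  set u : G → ℂ := fun g => (if g = 0 then (1 : ℂ) else 0) + (if g = t then Complex.I else 0)
    with hu
  have h := hψ u
  have hS : ∑ x : G, ∑ y : G, (ψ (x - y) : ℂ) * u x * (starRingEnd ℂ) (u y)
      = ((2 * ψ 0 : ℝ) : ℂ) + ((ψ t - ψ (-t) : ℝ) : ℂ) * Complex.I := by
    simp only [hu, map_add, apply_ite (starRingEnd ℂ), _root_.map_one, _root_.map_zero, Complex.conj_I,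
      mul_add, add_mul, ite_mul, mul_ite, zero_mul, mul_zero, one_mul, mul_one,
      Finset.sum_add_distrib, Finset.sum_ite_eq', Finset.mem_univ, if_true,
      sub_self, sub_zero, zero_sub]
    push_cast
    linear_combination (-(ψ 0 : ℝ) : ℂ) * Complex.I_sq
  rw [hS] at h
  have him := (Complex.le_def.mp h).2
  simp only [Complex.zero_im, Complex.add_im, Complex.ofReal_im, Complex.mul_im,
    Complex.ofReal_re, Complex.I_im, Complex.I_re, mul_zero, mul_one, zero_add] at him
  linarith

theorem posdef_triple_lower_bounds {G : Type*} [AddCommGroup G] [Fintype G]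
    (A : Set G) (hA : A.Nonempty) (ψ : G → ℝ) (hψ : IsPosDef ψ) :
    (((A.ncard : ℝ) ^ 3)⁻¹ * (∑ x : G, ψ x * ((shiftInter A x).ncard : ℝ)) ^ 3 ≤
        ∑ᶠ x ∈ A, ∑ᶠ y ∈ A, ∑ᶠ z ∈ A, ψ (x - y) * ψ (x - z) * ψ (y - z)) ∧
    (ψ 0 ^ 3 * (A.ncard : ℝ) ≤
        ∑ᶠ x ∈ A, ∑ᶠ y ∈ A, ∑ᶠ z ∈ A, ψ (x - y) * ψ (x - z) * ψ (y - z)) ∧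
    ((A.ncard : ℝ) ^ (-(1 : ℝ) / 2) *
        (∑ x : G, ψ x ^ 2 * ((shiftInter A x).ncard : ℝ)) ^ ((3 : ℝ) / 2) ≤
        ∑ᶠ x ∈ A, ∑ᶠ y ∈ A, ∑ᶠ z ∈ A, ψ (x - y) * ψ (x - z) * ψ (y - z)) := by
  classical
  haveI : Fintype ↥A := A.toFinite.fintype
  have heven : ∀ t : G, ψ (-t) = ψ t := aux_even hψ
  set M : Matrix ↥A ↥A ℝ := Matrix.of (fun a b : ↥A => ψ ((a : G) - (b : G))) with hMdef
  have hMapp : ∀ a b : ↥A, M a b = ψ ((a : G) - (b : G)) := fun _ _ => rfl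
  have hMsymm : ∀ a b : ↥A, M a b = M b a := by
    intro a b
    rw [hMapp, hMapp, show ((a : G) - b) = -((b : G) - a) by rw [neg_sub], heven]
  have hMpsd : M.PosSemidef := by
    refine Matrix.PosSemidef.of_dotProduct_mulVec_nonneg ?_ ?_
    · ext a b
      rw [Matrix.conjTranspose_apply, star_trivial]
      exact hMsymm b a
    · intro v
      set uu : G → ℂ := fun g => if h : g ∈ A then ((v ⟨g, h⟩ : ℝ) : ℂ) else 0 with huu
      have h := hψ uu
      have hred : ∑ x : G, ∑ y : G, (ψ (x - y) : ℂ) * uu x * (starRingEnd ℂ) (uu y)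
          = ((∑ a : ↥A, ∑ b : ↥A, ψ ((a : G) - b) * v a * v b : ℝ) : ℂ) := by
        calc ∑ x : G, ∑ y : G, (ψ (x - y) : ℂ) * uu x * (starRingEnd ℂ) (uu y)
            = ∑ x : G, (if x ∈ A then
                ∑ y : G, (ψ (x - y) : ℂ) * uu x * (starRingEnd ℂ) (uu y) else 0) := by
              refine Finset.sum_congr rfl fun x _ => ?_
              by_cases hx : x ∈ A
              · rw [if_pos hx]
              · rw [if_neg hx]
                have hux : uu x = 0 := dif_neg hx
                simp [hux]
          _ = ∑ a : ↥A, ∑ y : G, (ψ ((a : G) - y) : ℂ) * uu a * (starRingEnd ℂ) (uu y) :=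
              aux_sum_ite_mem _
          _ = ∑ a : ↥A, ∑ y : G, (if y ∈ A then
                (ψ ((a : G) - y) : ℂ) * uu a * (starRingEnd ℂ) (uu y) else 0) := by
              refine Finset.sum_congr rfl fun a _ => Finset.sum_congr rfl fun y _ => ?_
              by_cases hy : y ∈ A
              · rw [if_pos hy]
              · rw [if_neg hy]
                have huy : uu y = 0 := dif_neg hy
                simp [huy]
          _ = ∑ a : ↥A, ∑ b : ↥A,
                (ψ ((a : G) - b) : ℂ) * uu a * (starRingEnd ℂ) (uu b) := by
              refine Finset.sum_congr rfl fun a _ => ?_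
              exact aux_sum_ite_mem _
          _ = ((∑ a : ↥A, ∑ b : ↥A, ψ ((a : G) - b) * v a * v b : ℝ) : ℂ) := by
              push_cast
              refine Finset.sum_congr rfl fun a _ => Finset.sum_congr rfl fun b _ => ?_
              have ha : uu ↑a = ((v a : ℝ) : ℂ) := by
                rw [huu]; simp only []; rw [dif_pos a.2]
              have hb : (starRingEnd ℂ) (uu ↑b) = ((v b : ℝ) : ℂ) := by
                rw [huu]; simp only []; rw [dif_pos b.2, Complex.conj_ofReal]
              rw [ha, hb]
      rw [hred] at h
      have h0 : 0 ≤ ∑ a : ↥A, ∑ b : ↥A, ψ ((a : G) - b) * v a * v b :=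
        Complex.zero_le_real.mp h
      have hdp : star v ⬝ᵥ M.mulVec v = ∑ a : ↥A, ∑ b : ↥A, ψ ((a : G) - b) * v a * v b := by
        simp only [dotProduct, Matrix.mulVec, Pi.star_apply, star_trivial]
        refine Finset.sum_congr rfl fun a _ => ?_
        rw [Finset.mul_sum]
        refine Finset.sum_congr rfl fun b _ => ?_
        rw [hMapp]; ring
      rw [hdp]
      exact h0
  obtain ⟨hT0, hIneq1, hIneq2, hIneq3⟩ := aux_matrix_core M hMpsd
  set T : ℝ := ∑ i : ↥A, ∑ j : ↥A, ∑ k : ↥A, M i j * M j k * M k i with hTdef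
  set n : ℝ := (A.ncard : ℝ) with hndef
  have hcard : (Fintype.card ↥A : ℝ) = n := by
    rw [hndef, ← Nat.card_coe_set_eq, Nat.card_eq_fintype_card]
  have hnpos : (0 : ℝ) < n := by
    rw [hndef]
    have : 0 < A.ncard := (Set.ncard_pos A.toFinite).mpr hA
    exact_mod_cast this
  have hTS : (∑ᶠ x ∈ A, ∑ᶠ y ∈ A, ∑ᶠ z ∈ A, ψ (x - y) * ψ (x - z) * ψ (y - z)) = T := by
    rw [aux_finsum_mem]
    refine Finset.sum_congr rfl fun a _ => ?_
    rw [aux_finsum_mem]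
    refine Finset.sum_congr rfl fun b _ => ?_
    rw [aux_finsum_mem]
    refine Finset.sum_congr rfl fun c _ => ?_
    rw [hMapp, hMapp, hMapp,
      show ((c : G) - a) = -((a : G) - c) by rw [neg_sub], heven]
    ring
  have hq : (∑ x : G, ψ x * ((shiftInter A x).ncard : ℝ)) = ∑ i : ↥A, ∑ j : ↥A, M i j := by
    rw [aux_sum_shift A ψ, Finset.sum_comm]
    exact Finset.sum_congr rfl fun i _ => Finset.sum_congr rfl fun j _ => (hMapp i j).symm
  have ht2e : (∑ x : G, ψ x ^ 2 * ((shiftInter A x).ncard : ℝ))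
      = ∑ i : ↥A, ∑ j : ↥A, M i j ^ 2 := by
    rw [aux_sum_shift A (fun x => ψ x ^ 2), Finset.sum_comm]
    exact Finset.sum_congr rfl fun i _ => Finset.sum_congr rfl fun j _ => by rw [hMapp]
  have ht1e : (∑ i : ↥A, M i i) = n * ψ 0 := by
    have hd : ∀ i : ↥A, M i i = ψ 0 := fun i => by rw [hMapp, sub_self]
    rw [Finset.sum_congr rfl fun i _ => hd i, Finset.sum_const, Finset.card_univ,
      nsmul_eq_mul, hcard]
  rw [hcard] at hIneq1 hIneq2 hIneq3
  refine ⟨?_, ?_, ?_⟩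
  · rw [hTS, hq, inv_mul_le_iff₀ (by positivity)]
    exact hIneq1
  · rw [hTS]
    have h2 : (n * ψ 0) ^ 3 ≤ n ^ 2 * T := ht1e ▸ hIneq2
    have hn2 : (0 : ℝ) < n ^ 2 := by positivity
    rw [← mul_le_mul_iff_right₀ hn2]
    calc n ^ 2 * (ψ 0 ^ 3 * n) = (n * ψ 0) ^ 3 := by ring
      _ ≤ n ^ 2 * T := h2
  · rw [hTS, ht2e]
    set t2 : ℝ := ∑ i : ↥A, ∑ j : ↥A, M i j ^ 2 with ht2def
    have ht20 : 0 ≤ t2 := by positivity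
    have hL0 : 0 ≤ n ^ (-(1 : ℝ) / 2) * t2 ^ ((3 : ℝ) / 2) := by positivity
    have hsq : (n ^ (-(1 : ℝ) / 2) * t2 ^ ((3 : ℝ) / 2)) ^ 2 ≤ T ^ 2 := by
      have e : (n ^ (-(1 : ℝ) / 2) * t2 ^ ((3 : ℝ) / 2)) ^ 2 = n⁻¹ * t2 ^ 3 := by
        rw [mul_pow, ← Real.rpow_natCast (n ^ (-(1 : ℝ) / 2)) 2,
          ← Real.rpow_natCast (t2 ^ ((3 : ℝ) / 2)) 2,
          ← Real.rpow_mul hnpos.le, ← Real.rpow_mul ht20]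
        norm_num
        rw [Real.rpow_neg_one]
        norm_num
      rw [e, inv_mul_le_iff₀ hnpos]
      exact hIneq3
    have hfin := Real.sqrt_le_sqrt hsq
    rwa [Real.sqrt_sq hL0, Real.sqrt_sq hT0] at hfin
end
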